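/- arXiv:math/0508432 — 11 statements merged into one kernel-verified Lean document; each statement's English description precedes it below -/
import Mathlib

section
/- For g ≥ 1, ζ = e^{2πi/(2g+2)}, and integers i, j with 1 ≤ i, j ≤ g, the following identity of complex numbers holds: Σ_{k=1}^{g} ζ^k (ζ^{-2ik} - 1)(ζ^{2kj} - 1)/(1 - ζ^{2k}) = Σ_{ν=1}^{i} ( (1 + ζ^{1-2ν+2j})/(1 - ζ^{1-2ν+2j}) - (1 + ζ^{1-2ν})/(1 - ζ^{1-2ν}) ). -/
open Finset

lemma stmt2_aux_telescope {x : ℂ} (hx : x ≠ 0) (i : ℕ) :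
    x ^ (-(i : ℤ)) - 1 = (1 - x) * ∑ ν ∈ Finset.Icc 1 i, x ^ (-(ν : ℤ)) := by
  induction i with
  | zero => simp
  | succ n ih =>
    rw [Finset.sum_Icc_succ_top (by omega), mul_add, ← ih]
    have h1 : x ^ (-((n + 1 : ℕ) : ℤ)) = x ^ (-(n : ℤ)) * x⁻¹ := by
      push_cast
      rw [← zpow_neg_one x, ← zpow_add₀ hx]
      ring_nf
    rw [h1]
    field_simp
    ring

lemma stmt2_aux_geom {g : ℕ} {w : ℂ} (h : w ^ (g + 1) = -1) :
    ∑ k ∈ Finset.Icc 1 g, w ^ k = (1 + w) / (1 - w) := by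
  have hw1 : w ≠ 1 := by rintro rfl; simp at h; exact absurd h (by norm_num)
  have e1 : ∑ k ∈ Finset.Icc 1 g, w ^ k = ∑ k ∈ Finset.range g, w ^ (1 + k) := by
    rw [← Finset.Ico_add_one_right_eq_Icc, Finset.sum_Ico_eq_sum_range]
    simp
  have e2 : ∑ k ∈ Finset.range g, w ^ (1 + k) = w * ∑ k ∈ Finset.range g, w ^ k := by
    rw [Finset.mul_sum]
    exact Finset.sum_congr rfl fun k _ => by rw [pow_add, pow_one]
  rw [e1, e2, geom_sum_eq hw1]
  have h2 : w * (w ^ g - 1) = -1 - w := by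
    have : w * w ^ g = -1 := by rw [← pow_succ']; exact h
    linear_combination this
  rw [← mul_div_assoc, h2, div_eq_div_iff (sub_ne_zero.mpr hw1) (sub_ne_zero.mpr (Ne.symm hw1))]
  ring

/-- Schindler-type identity for the entries of the period matrix of `w² = z^{2g+2} - 1`. -/
theorem stmt2 (g i j : ℕ) (hg : 1 ≤ g) (hi1 : 1 ≤ i) (hig : i ≤ g) (hj1 : 1 ≤ j) (hjg : j ≤ g)
    (ζ : ℂ) (hζ : ζ = Complex.exp (2 * Real.pi * Complex.I / (2 * g + 2))) :
    ∑ k ∈ Finset.Icc 1 g,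
      ζ ^ (k : ℤ) * (ζ ^ (-(2 * (i : ℤ) * (k : ℤ))) - 1) * (ζ ^ (2 * (k : ℤ) * (j : ℤ)) - 1)
        / (1 - ζ ^ (2 * (k : ℤ))) =
    ∑ ν ∈ Finset.Icc 1 i,
      ((1 + ζ ^ (1 - 2 * (ν : ℤ) + 2 * (j : ℤ))) / (1 - ζ ^ (1 - 2 * (ν : ℤ) + 2 * (j : ℤ)))
        - (1 + ζ ^ (1 - 2 * (ν : ℤ))) / (1 - ζ ^ (1 - 2 * (ν : ℤ)))) := by
  have hcast : ((2 * g + 2 : ℕ) : ℂ) = 2 * (g : ℂ) + 2 := by push_cast; ring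
  have hprim : IsPrimitiveRoot ζ (2 * g + 2) := by
    have h := Complex.isPrimitiveRoot_exp (2 * g + 2) (by omega)
    rw [hζ, show (2 * (g : ℂ) + 2) = ((2 * g + 2 : ℕ) : ℂ) from hcast.symm]
    exact h
  have hζ0 : ζ ≠ 0 := hprim.ne_zero (by omega)
  have hden : (2 * (g : ℂ) + 2) ≠ 0 := by
    rw [← hcast]
    exact Nat.cast_ne_zero.mpr (by omega)
  have hhalf : ζ ^ (g + 1) = -1 := by
    rw [hζ, ← Complex.exp_nat_mul,
      show ((g + 1 : ℕ) : ℂ) * (2 * Real.pi * Complex.I / (2 * (g : ℂ) + 2))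
        = Real.pi * Complex.I by push_cast; field_simp]
    exact Complex.exp_pi_mul_I
  have hodd : ∀ m : ℤ, Odd m → (ζ ^ m) ^ (g + 1) = -1 := by
    intro m hm
    rw [← zpow_natCast (ζ ^ m) (g + 1), ← zpow_mul, mul_comm, zpow_mul, zpow_natCast, hhalf,
      Odd.neg_one_zpow hm]
  have h2k : ∀ k ∈ Finset.Icc 1 g, ζ ^ (2 * (k : ℤ)) ≠ 1 := by
    intro k hk h
    have h' : ζ ^ (2 * k) = 1 := by
      have hc2 : ((2 * k : ℕ) : ℤ) = 2 * (k : ℤ) := by push_cast; ring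
      rw [← zpow_natCast ζ (2 * k), hc2, h]
    have hd := (IsPrimitiveRoot.pow_eq_one_iff_dvd hprim (2 * k)).mp h'
    have hle := Nat.le_of_dvd (by simp only [Finset.mem_Icc] at hk; omega) hd
    simp only [Finset.mem_Icc] at hk
    omega
  -- per-k rewriting of the summand
  have hterm : ∀ k ∈ Finset.Icc 1 g,
      ζ ^ (k : ℤ) * (ζ ^ (-(2 * (i : ℤ) * (k : ℤ))) - 1) * (ζ ^ (2 * (k : ℤ) * (j : ℤ)) - 1)
        / (1 - ζ ^ (2 * (k : ℤ)))
      = ∑ ν ∈ Finset.Icc 1 i,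
          (ζ ^ ((1 - 2 * (ν : ℤ) + 2 * (j : ℤ)) * (k : ℤ)) - ζ ^ ((1 - 2 * (ν : ℤ)) * (k : ℤ))) := by
    intro k hk
    have hx1 : (1 : ℂ) - ζ ^ (2 * (k : ℤ)) ≠ 0 := sub_ne_zero.mpr (Ne.symm (h2k k hk))
    have ht' : ζ ^ (-(2 * (i : ℤ) * (k : ℤ))) - 1
        = (1 - ζ ^ (2 * (k : ℤ))) * ∑ ν ∈ Finset.Icc 1 i, ζ ^ (2 * (k : ℤ) * (-(ν : ℤ))) := by
      have h0 := stmt2_aux_telescope (zpow_ne_zero (2 * (k : ℤ)) hζ0) i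
      simp only [← zpow_mul] at h0
      rw [show (-(2 * (i : ℤ) * (k : ℤ))) = 2 * (k : ℤ) * (-(i : ℤ)) by ring]
      exact h0
    rw [div_eq_iff hx1, ht', Finset.mul_sum, Finset.mul_sum, Finset.sum_mul, Finset.sum_mul]
    refine Finset.sum_congr rfl fun ν hν => ?_
    have e1 : ζ ^ (k : ℤ) * ζ ^ (2 * (k : ℤ) * (-(ν : ℤ))) = ζ ^ ((1 - 2 * (ν : ℤ)) * (k : ℤ)) := by
      rw [← zpow_add₀ hζ0]; congr 1; ring
    have e2 : ζ ^ ((1 - 2 * (ν : ℤ)) * (k : ℤ)) * ζ ^ (2 * (k : ℤ) * (j : ℤ))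
        = ζ ^ ((1 - 2 * (ν : ℤ) + 2 * (j : ℤ)) * (k : ℤ)) := by
      rw [← zpow_add₀ hζ0]; congr 1; ring
    linear_combination (1 - ζ ^ (2 * (k : ℤ))) * (ζ ^ (2 * (k : ℤ) * (j : ℤ)) - 1) * e1
      + (1 - ζ ^ (2 * (k : ℤ))) * e2
  rw [Finset.sum_congr rfl hterm, Finset.sum_comm]
  refine Finset.sum_congr rfl fun ν hν => ?_
  have hodd1 : Odd (1 - 2 * (ν : ℤ) + 2 * (j : ℤ)) := ⟨(j : ℤ) - ν, by ring⟩
  have hodd2 : Odd (1 - 2 * (ν : ℤ)) := ⟨-(ν : ℤ), by ring⟩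
  rw [Finset.sum_sub_distrib]
  have hs1 : ∀ m : ℤ, ∑ k ∈ Finset.Icc 1 g, ζ ^ (m * (k : ℤ))
      = ∑ k ∈ Finset.Icc 1 g, (ζ ^ m) ^ k :=
    fun m => Finset.sum_congr rfl fun k _ => by rw [zpow_mul, zpow_natCast]
  rw [hs1, hs1, stmt2_aux_geom (hodd _ hodd1), stmt2_aux_geom (hodd _ hodd2)]
end

section
/- For g ≥ 1, ζ = e^{2πi/(2g+2)}, and 1 ≤ i, j ≤ g, the number (1/(g+1)) Σ_{k=1}^{g} ζ^k (ζ^{-2ik} - 1)(ζ^{2kj} - 1)/(1 - ζ^{2k}) is purely imaginary, i.e., its real part is zero. -/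
open Finset

/-- The `(i,j)`-entry of the period matrix of `w² = z^{2g+2} - 1` is purely imaginary. -/
theorem stmt3 (g i j : ℕ) (hg : 1 ≤ g) (hi1 : 1 ≤ i) (hig : i ≤ g) (hj1 : 1 ≤ j) (hjg : j ≤ g)
    (ζ : ℂ) (hζ : ζ = Complex.exp (2 * Real.pi * Complex.I / (2 * g + 2))) :
    ((1 / ((g : ℂ) + 1)) * ∑ k ∈ Finset.Icc 1 g,
      ζ ^ (k : ℤ) * (ζ ^ (-(2 * (i : ℤ) * (k : ℤ))) - 1) * (ζ ^ (2 * (k : ℤ) * (j : ℤ)) - 1)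
        / (1 - ζ ^ (2 * (k : ℤ)))).re = 0 := by
  have hζ0 : ζ ≠ 0 := by rw [hζ]; exact Complex.exp_ne_zero _
  have hden : (2 * (g : ℂ) + 2) ≠ 0 := by
    have h1 : ((2 * g + 2 : ℕ) : ℂ) ≠ 0 := Nat.cast_ne_zero.mpr (by omega)
    push_cast at h1
    convert h1 using 2
  -- ζ^(g+1) = -1
  have hhalf : ζ ^ ((g : ℤ) + 1) = -1 := by
    rw [hζ, ← Complex.exp_int_mul]
    rw [show ((((g : ℤ) + 1 : ℤ)) : ℂ) * (2 * Real.pi * Complex.I / (2 * (g : ℂ) + 2)) =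
        Real.pi * Complex.I by push_cast; field_simp]
    exact Complex.exp_pi_mul_I
  have hpow : ζ ^ (2 * (g : ℤ) + 2) = 1 := by
    have : (2 : ℤ) * g + 2 = 2 * ((g : ℤ) + 1) := by ring
    rw [this, zpow_mul' ζ, hhalf]
    norm_num
  -- periodicity
  have hper : ∀ a t : ℤ, ζ ^ (a + (2 * (g : ℤ) + 2) * t) = ζ ^ a := by
    intro a t
    rw [zpow_add₀ hζ0, zpow_mul, hpow, one_zpow, mul_one]
  -- conjugation
  have harg : (2 * Real.pi * Complex.I / (2 * (g : ℂ) + 2)) =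
      ((2 * Real.pi / (2 * g + 2) : ℝ) : ℂ) * Complex.I := by
    push_cast
    field_simp
  have hconj : (starRingEnd ℂ) ζ = ζ⁻¹ := by
    rw [hζ, harg, ← Complex.exp_conj, map_mul, Complex.conj_ofReal, Complex.conj_I, mul_neg,
      Complex.exp_neg]
  have hconjz : ∀ n : ℤ, (starRingEnd ℂ) (ζ ^ n) = ζ ^ (-n) := by
    intro n
    rw [map_zpow₀, hconj, inv_zpow, ← zpow_neg]
  set T : ℕ → ℂ := fun k =>
    ζ ^ (k : ℤ) * (ζ ^ (-(2 * (i : ℤ) * (k : ℤ))) - 1) * (ζ ^ (2 * (k : ℤ) * (j : ℤ)) - 1)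
      / (1 - ζ ^ (2 * (k : ℤ))) with hT
  set S : ℂ := ∑ k ∈ Finset.Icc 1 g, T k with hS
  have key : ∀ k ∈ Finset.Icc 1 g, (starRingEnd ℂ) (T k) = -T (g + 1 - k) := by
    intro k hk
    simp only [Finset.mem_Icc] at hk
    have hkg : (↑(g + 1 - k) : ℤ) = (g : ℤ) + 1 - k := by
      have : k ≤ g + 1 := le_trans hk.2 (Nat.le_succ g)
      push_cast [Nat.cast_sub this]; ring
    have e1 : ζ ^ ((↑(g + 1 - k) : ℤ)) = -ζ ^ (-(k : ℤ)) := by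
      rw [hkg, show (g : ℤ) + 1 - k = -(k : ℤ) + ((g : ℤ) + 1) by ring,
        zpow_add₀ hζ0, hhalf]; ring
    have e2 : ζ ^ (-(2 * (i : ℤ) * (↑(g + 1 - k) : ℤ))) = ζ ^ (2 * (i : ℤ) * k) := by
      rw [hkg, show -(2 * (i : ℤ) * ((g : ℤ) + 1 - k)) =
        2 * (i : ℤ) * k + (2 * (g : ℤ) + 2) * (-(i : ℤ)) by ring, hper]
    have e3 : ζ ^ (2 * (↑(g + 1 - k) : ℤ) * (j : ℤ)) = ζ ^ (-(2 * (k : ℤ) * j)) := by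
      rw [hkg, show 2 * ((g : ℤ) + 1 - k) * (j : ℤ) =
        -(2 * (k : ℤ) * j) + (2 * (g : ℤ) + 2) * (j : ℤ) by ring, hper]
    have e4 : ζ ^ (2 * (↑(g + 1 - k) : ℤ)) = ζ ^ (-(2 * (k : ℤ))) := by
      rw [hkg, show 2 * ((g : ℤ) + 1 - k) =
        -(2 * (k : ℤ)) + (2 * (g : ℤ) + 2) * 1 by ring, hper]
    rw [hT]
    simp only [map_div₀, map_mul, map_sub, map_one, hconjz, e1, e2, e3, e4]
    rw [neg_neg]
    ring
  have hSconj : (starRingEnd ℂ) S = -S := by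
    rw [hS, map_sum, ← Finset.sum_neg_distrib]
    rw [Finset.sum_congr rfl key]
    apply Finset.sum_nbij' (fun k => g + 1 - k) (fun k => g + 1 - k)
    · intro a ha; simp only [Finset.mem_Icc] at *; omega
    · intro a ha; simp only [Finset.mem_Icc] at *; omega
    · intro a ha; simp only [Finset.mem_Icc] at ha; omega
    · intro a ha; simp only [Finset.mem_Icc] at ha; omega
    · intro a ha; rfl
  have hSre : S.re = 0 := by
    have := congrArg Complex.re hSconj
    simp [Complex.conj_re] at this
    linarith [this]
  have hc : ((1 : ℂ) / ((g : ℂ) + 1)) = ((1 / ((g : ℝ) + 1) : ℝ) : ℂ) := by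
    push_cast; ring
  rw [hc, Complex.re_ofReal_mul, hSre, mul_zero]
end

section
/- Let γ₁, γ₂ be composable smooth paths in a smooth manifold X and let ω₁, ω₂ be smooth 1-forms on X. Then the iterated integral satisfies ∫_{γ₁·γ₂} ω₁ω₂ = ∫_{γ₁} ω₁ω₂ + ∫_{γ₂} ω₁ω₂ + (∫_{γ₁} ω₁)(∫_{γ₂} ω₂), where ∫_γ ω₁ω₂ = ∫_{0≤t₁≤t₂≤1} f₁(t₁)f₂(t₂) dt₁dt₂ with γ*(ωᵢ) = fᵢ(t)dt. -/
open intervalIntegral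

private lemma stmt4_aux_int {f g : ℝ → ℂ} (hf : Continuous f) (hg : Continuous g) (a b : ℝ) :
    IntervalIntegrable (fun t => if t ≤ (1:ℝ) / 2 then f t else g t) MeasureTheory.volume a b := by
  apply ((hf.norm.add hg.norm).intervalIntegrable a b).mono_fun
  · exact (Measurable.ite measurableSet_Iic hf.measurable hg.measurable).aestronglyMeasurable
  · filter_upwards with t
    have habs : ‖‖f t‖ + ‖g t‖‖ = ‖f t‖ + ‖g t‖ := by
      rw [Real.norm_eq_abs]; exact abs_of_nonneg (by positivity)
    change _ ≤ ‖‖f t‖ + ‖g t‖‖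
    rw [habs]
    split_ifs with h
    · exact le_add_of_nonneg_right (norm_nonneg _)
    · exact le_add_of_nonneg_left (norm_nonneg _)

/-- Shuffle relation for the iterated integral `∫ ω₁ω₂` along a composition of paths:
`f₁, f₂` (resp. `g₁, g₂`) are the pullbacks of the 1-forms `ω₁, ω₂` along `γ₁` (resp. `γ₂`),
and `h₁, h₂` are the pullbacks along the composite path `γ₁·γ₂`. -/
theorem stmt4 (f₁ f₂ g₁ g₂ h₁ h₂ : ℝ → ℂ)
    (hf₁ : Continuous f₁) (hf₂ : Continuous f₂) (hg₁ : Continuous g₁) (hg₂ : Continuous g₂)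
    (hh₁ : ∀ t : ℝ, h₁ t = if t ≤ 1 / 2 then 2 * f₁ (2 * t) else 2 * g₁ (2 * t - 1))
    (hh₂ : ∀ t : ℝ, h₂ t = if t ≤ 1 / 2 then 2 * f₂ (2 * t) else 2 * g₂ (2 * t - 1)) :
    (∫ t₂ in (0:ℝ)..1, (∫ t₁ in (0:ℝ)..t₂, h₁ t₁) * h₂ t₂) =
      (∫ t₂ in (0:ℝ)..1, (∫ t₁ in (0:ℝ)..t₂, f₁ t₁) * f₂ t₂)
      + (∫ t₂ in (0:ℝ)..1, (∫ t₁ in (0:ℝ)..t₂, g₁ t₁) * g₂ t₂)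
      + (∫ t in (0:ℝ)..1, f₁ t) * (∫ t in (0:ℝ)..1, g₂ t) := by
  have hcf : Continuous (fun t : ℝ => 2 * f₁ (2 * t)) :=
    continuous_const.mul (hf₁.comp (continuous_const.mul continuous_id))
  have hcg : Continuous (fun t : ℝ => 2 * g₁ (2 * t - 1)) :=
    continuous_const.mul (hg₁.comp ((continuous_const.mul continuous_id).sub continuous_const))
  have hh₁int : ∀ a b : ℝ, IntervalIntegrable h₁ MeasureTheory.volume a b := by
    intro a b
    have : h₁ = fun t => if t ≤ (1:ℝ)/2 then 2 * f₁ (2 * t) else 2 * g₁ (2 * t - 1) :=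
      funext hh₁
    rw [this]
    exact stmt4_aux_int hcf hcg a b
  have hh₂int : ∀ a b : ℝ, IntervalIntegrable h₂ MeasureTheory.volume a b := by
    intro a b
    have : h₂ = fun t => if t ≤ (1:ℝ)/2 then 2 * f₂ (2 * t) else 2 * g₂ (2 * t - 1) :=
      funext hh₂
    rw [this]
    exact stmt4_aux_int (continuous_const.mul (hf₂.comp (continuous_const.mul continuous_id)))
      (continuous_const.mul (hg₂.comp ((continuous_const.mul continuous_id).sub continuous_const)))
      a b
  have hprim : Continuous (fun t : ℝ => ∫ s in (0:ℝ)..t, h₁ s) :=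
    intervalIntegral.continuous_primitive hh₁int 0
  -- change of variables φ t = 2 t
  have hsub1 : ∀ (F : ℝ → ℂ), Continuous F → ∀ a b : ℝ,
      (∫ t in a..b, (2:ℝ) • F (2 * t)) = ∫ u in (2*a)..(2*b), F u := by
    intro F hF a b
    have := intervalIntegral.integral_comp_smul_deriv
      (f := fun t : ℝ => 2 * t) (f' := fun _ : ℝ => (2:ℝ)) (g := F) (a := a) (b := b)
      (fun x _ => by simpa using ((hasDerivAt_id x).const_mul (2:ℝ)))
      continuousOn_const hF
    simpa [Function.comp] using this
  -- change of variables φ t = 2 t - 1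
  have hsub2 : ∀ (F : ℝ → ℂ), Continuous F → ∀ a b : ℝ,
      (∫ t in a..b, (2:ℝ) • F (2 * t - 1)) = ∫ u in (2*a-1)..(2*b-1), F u := by
    intro F hF a b
    have := intervalIntegral.integral_comp_smul_deriv
      (f := fun t : ℝ => 2 * t - 1) (f' := fun _ : ℝ => (2:ℝ)) (g := F) (a := a) (b := b)
      (fun x _ => by simpa using (((hasDerivAt_id x).const_mul (2:ℝ)).sub_const 1))
      continuousOn_const hF
    simpa [Function.comp] using this
  -- inner integral on the first half
  have innerA : ∀ t : ℝ, 0 ≤ t → t ≤ 1/2 →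
      (∫ s in (0:ℝ)..t, h₁ s) = ∫ u in (0:ℝ)..(2*t), f₁ u := by
    intro t ht0 ht1
    have : (∫ s in (0:ℝ)..t, h₁ s) = ∫ s in (0:ℝ)..t, (2:ℝ) • f₁ (2 * s) := by
      apply intervalIntegral.integral_congr
      intro s hs
      rw [Set.uIcc_of_le ht0] at hs
      rw [hh₁ s, if_pos (hs.2.trans ht1)]
      simp [Complex.real_smul]
    rw [this, hsub1 f₁ hf₁]
    norm_num
  -- inner integral on the second half
  have innerB : ∀ t : ℝ, 1/2 ≤ t →
      (∫ s in (0:ℝ)..t, h₁ s) = (∫ u in (0:ℝ)..1, f₁ u) + ∫ u in (0:ℝ)..(2*t-1), g₁ u := by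
    intro t ht
    have hsplit : (∫ s in (0:ℝ)..t, h₁ s)
        = (∫ s in (0:ℝ)..(1/2:ℝ), h₁ s) + ∫ s in (1/2:ℝ)..t, h₁ s :=
      (intervalIntegral.integral_add_adjacent_intervals (hh₁int 0 (1/2)) (hh₁int (1/2) t)).symm
    have h1 : (∫ s in (0:ℝ)..(1/2:ℝ), h₁ s) = ∫ u in (0:ℝ)..1, f₁ u := by
      have := innerA (1/2) (by norm_num) le_rfl
      norm_num at this ⊢
      exact this
    have h2 : (∫ s in (1/2:ℝ)..t, h₁ s) = ∫ u in (0:ℝ)..(2*t-1), g₁ u := by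
      have : (∫ s in (1/2:ℝ)..t, h₁ s) = ∫ s in (1/2:ℝ)..t, (2:ℝ) • g₁ (2 * s - 1) := by
        apply intervalIntegral.integral_congr_ae
        filter_upwards with s hs
        rw [Set.uIoc_of_le ht] at hs
        rw [hh₁ s, if_neg (not_le.mpr hs.1)]
        simp [Complex.real_smul]
      rw [this, hsub2 g₁ hg₁]
      norm_num
    rw [hsplit, h1, h2]
  -- split the outer integral
  have hint_outer : ∀ a b : ℝ, IntervalIntegrable
      (fun t => (∫ s in (0:ℝ)..t, h₁ s) * h₂ t) MeasureTheory.volume a b := by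
    intro a b
    exact (hh₂int a b).continuousOn_mul hprim.continuousOn
  rw [← intervalIntegral.integral_add_adjacent_intervals (hint_outer 0 (1/2))
    (hint_outer (1/2) 1)]
  -- first half
  have partA : (∫ t in (0:ℝ)..(1/2:ℝ), (∫ s in (0:ℝ)..t, h₁ s) * h₂ t)
      = ∫ t₂ in (0:ℝ)..1, (∫ t₁ in (0:ℝ)..t₂, f₁ t₁) * f₂ t₂ := by
    have step : (∫ t in (0:ℝ)..(1/2:ℝ), (∫ s in (0:ℝ)..t, h₁ s) * h₂ t)
        = ∫ t in (0:ℝ)..(1/2:ℝ), (2:ℝ) • ((∫ u in (0:ℝ)..(2*t), f₁ u) * f₂ (2*t)) := by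
      apply intervalIntegral.integral_congr
      intro t ht
      rw [Set.uIcc_of_le (by norm_num : (0:ℝ) ≤ 1/2)] at ht
      show (∫ s in (0:ℝ)..t, h₁ s) * h₂ t = (2:ℝ) • ((∫ u in (0:ℝ)..(2*t), f₁ u) * f₂ (2*t))
      rw [innerA t ht.1 ht.2, hh₂ t, if_pos ht.2]
      simp [Complex.real_smul]; ring
    rw [step]
    have hF : Continuous (fun u : ℝ => (∫ v in (0:ℝ)..u, f₁ v) * f₂ u) :=
      (intervalIntegral.continuous_primitive (fun a b => hf₁.intervalIntegrable a b) 0).mul hf₂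
    have hsub := hsub1 (fun u : ℝ => (∫ v in (0:ℝ)..u, f₁ v) * f₂ u) hF 0 (1/2)
    rw [show (2:ℝ)*0 = 0 by norm_num, show (2:ℝ)*(1/2) = 1 by norm_num] at hsub
    exact hsub
  -- second half
  have partB : (∫ t in (1/2:ℝ)..1, (∫ s in (0:ℝ)..t, h₁ s) * h₂ t)
      = (∫ t₂ in (0:ℝ)..1, (∫ t₁ in (0:ℝ)..t₂, g₁ t₁) * g₂ t₂)
        + (∫ t in (0:ℝ)..1, f₁ t) * (∫ t in (0:ℝ)..1, g₂ t) := by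
    have step : (∫ t in (1/2:ℝ)..1, (∫ s in (0:ℝ)..t, h₁ s) * h₂ t)
        = ∫ t in (1/2:ℝ)..1, (2:ℝ) •
            (((∫ u in (0:ℝ)..1, f₁ u) + ∫ u in (0:ℝ)..(2*t-1), g₁ u) * g₂ (2*t-1)) := by
      apply intervalIntegral.integral_congr_ae
      filter_upwards with t ht
      rw [Set.uIoc_of_le (by norm_num : (1/2:ℝ) ≤ 1)] at ht
      show (∫ s in (0:ℝ)..t, h₁ s) * h₂ t = (2:ℝ) •
        (((∫ u in (0:ℝ)..1, f₁ u) + ∫ u in (0:ℝ)..(2*t-1), g₁ u) * g₂ (2*t-1))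
      rw [innerB t ht.1.le, hh₂ t, if_neg (not_le.mpr ht.1)]
      simp [Complex.real_smul]; ring
    rw [step]
    have hF : Continuous (fun u : ℝ =>
        ((∫ v in (0:ℝ)..1, f₁ v) + ∫ v in (0:ℝ)..u, g₁ v) * g₂ u) :=
      ((continuous_const.add
        (intervalIntegral.continuous_primitive (fun a b => hg₁.intervalIntegrable a b) 0)).mul hg₂)
    have hsub := hsub2 (fun u : ℝ =>
        ((∫ v in (0:ℝ)..1, f₁ v) + ∫ v in (0:ℝ)..u, g₁ v) * g₂ u) hF (1/2) 1
    rw [show (2:ℝ)*(1/2) - 1 = 0 by norm_num, show (2:ℝ)*1 - 1 = 1 by norm_num] at hsub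
    rw [hsub]
    have hsplit : (∫ u in (0:ℝ)..1,
        ((∫ v in (0:ℝ)..1, f₁ v) + ∫ v in (0:ℝ)..u, g₁ v) * g₂ u)
        = (∫ u in (0:ℝ)..1, (∫ v in (0:ℝ)..1, f₁ v) * g₂ u)
          + ∫ u in (0:ℝ)..1, (∫ v in (0:ℝ)..u, g₁ v) * g₂ u := by
      rw [← intervalIntegral.integral_add]
      · apply intervalIntegral.integral_congr
        intro u _
        ring
      · exact (hg₂.intervalIntegrable 0 1).const_mul _
      · exact (hg₂.intervalIntegrable 0 1).continuousOn_mul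
          (intervalIntegral.continuous_primitive (fun a b => hg₁.intervalIntegrable a b) 0).continuousOn
    rw [hsplit, intervalIntegral.integral_const_mul]
    ring
  rw [partA, partB]
  ring
end

section
/- Let g ≥ 3 and let H be a free ℤ-module of rank 2g equipped with a unimodular symplectic (alternating) pairing ( , ) : H ⊗ H → ℤ. Define p : H^{⊗3} → H^{⊕3} by p(a⊗b⊗c) = ((a,b)c, (b,c)a, (c,a)b). Then p is surjective and its kernel (H^{⊗3})′ is a free ℤ-module of rank (2g)³ - 6g. -/
open TensorProduct

lemma intModule_eq {M : Type*} [AddCommGroup M] (m1 m2 : Module ℤ M) : m1 = m2 := by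
  letI := AddCommGroup.uniqueIntModule (M := M)
  exact Subsingleton.elim m1 m2

lemma int_finite_congr {M : Type*} [AddCommGroup M] {m1 m2 : Module ℤ M}
    (h : @Module.Finite ℤ M _ _ m1) : @Module.Finite ℤ M _ _ m2 := by
  cases intModule_eq m1 m2; exact h

lemma int_free_congr {M : Type*} [AddCommGroup M] {m1 m2 : Module ℤ M}
    (h : @Module.Free ℤ M _ _ m1) : @Module.Free ℤ M _ _ m2 := by
  cases intModule_eq m1 m2; exact h

lemma int_finrank_congr {M : Type*} [AddCommGroup M] (m1 m2 : Module ℤ M) :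
    @Module.finrank ℤ M _ _ m1 = @Module.finrank ℤ M _ _ m2 := by
  cases intModule_eq m1 m2; rfl

set_option maxHeartbeats 1000000 in
/-- For `H` free of rank `2g` with a unimodular symplectic pairing `B` (given by a symplectic
basis), the map `p : H^{⊗3} → H^{⊕3}`, `a⊗b⊗c ↦ ((a,b)c, (b,c)a, (c,a)b)`, is surjective and
its kernel `(H^{⊗3})′` is free of rank `(2g)³ - 6g`. -/
theorem stmt7 (g : ℕ) (hg : 3 ≤ g) (H : Type) [AddCommGroup H] [Module ℤ H]
    (b : Module.Basis (Fin g ⊕ Fin g) ℤ H) (B : H →ₗ[ℤ] H →ₗ[ℤ] ℤ)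
    (hxx : ∀ i j, B (b (Sum.inl i)) (b (Sum.inl j)) = 0)
    (hyy : ∀ i j, B (b (Sum.inr i)) (b (Sum.inr j)) = 0)
    (hxy : ∀ i j, B (b (Sum.inl i)) (b (Sum.inr j)) = if i = j then 1 else 0)
    (hyx : ∀ i j, B (b (Sum.inr i)) (b (Sum.inl j)) = if i = j then -1 else 0)
    (p : H ⊗[ℤ] (H ⊗[ℤ] H) →ₗ[ℤ] H × H × H)
    (hp : ∀ a c d : H, p (a ⊗ₜ[ℤ] (c ⊗ₜ[ℤ] d)) = (B a c • d, B c d • a, B d a • c)) :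
    Function.Surjective p ∧ Module.Free ℤ (LinearMap.ker p) ∧
      Module.finrank ℤ (LinearMap.ker p) = (2 * g) ^ 3 - 6 * g := by
  -- indices
  set i0 : Fin g := ⟨0, by omega⟩ with hi0
  set i1 : Fin g := ⟨1, by omega⟩ with hi1
  set i2 : Fin g := ⟨2, by omega⟩ with hi2
  have h01 : i0 ≠ i1 := by simp [hi0, hi1, Fin.ext_iff]
  have h10 : i1 ≠ i0 := by simp [hi0, hi1, Fin.ext_iff]
  have h20 : i2 ≠ i0 := by simp [hi0, hi2, Fin.ext_iff]
  have h02 : i0 ≠ i2 := by simp [hi0, hi2, Fin.ext_iff]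
  set x : Fin g → H := fun k => b (Sum.inl k) with hx
  set y : Fin g → H := fun k => b (Sum.inr k) with hy
  -- surjectivity
  have hsurj : Function.Surjective p := by
    rintro ⟨u, v, w⟩
    refine ⟨(x i0 ⊗ₜ (y i0 ⊗ₜ u) - (B (y i0) u) • (x i0 ⊗ₜ (x i1 ⊗ₜ y i1))
        - (B u (x i0)) • (y i2 ⊗ₜ (y i0 ⊗ₜ x i2)))
      + (v ⊗ₜ (x i0 ⊗ₜ y i0) - (B v (x i0)) • (x i1 ⊗ₜ (y i1 ⊗ₜ y i0))
        - (B (y i0) v) • (y i2 ⊗ₜ (x i0 ⊗ₜ x i2)))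
      + (y i0 ⊗ₜ (w ⊗ₜ x i0) - (B (y i0) w) • (x i1 ⊗ₜ (y i1 ⊗ₜ x i0))
        - (B w (x i0)) • (y i0 ⊗ₜ (x i1 ⊗ₜ y i1))), ?_⟩
    simp only [map_add, map_sub, map_smul, hp, hx, hy, hxx, hxy, hyx, hyy,
      if_pos rfl, if_neg h01, if_neg h10, if_neg h20, if_neg h02]
    simp only [Prod.smul_mk, Prod.mk_add_mk, Prod.mk_sub_mk, smul_zero, zero_smul, one_smul,
      neg_smul, smul_neg, smul_smul]
    ext <;> simp [zsmul_zero]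
  refine ⟨hsurj, ?_⟩
  haveI : Module.Finite ℤ H := Module.Finite.of_basis b
  haveI : Module.Free ℤ H := Module.Free.of_basis b
  haveI := @IsScalarTower.left ℤ H _ ‹Module ℤ H›.toDistribMulAction.toMulAction
  haveI := @smulCommClass_self ℤ H _ ‹Module ℤ H›.toDistribMulAction.toMulAction
  haveI : Module.Finite ℤ (H ⊗[ℤ] H) :=
    int_finite_congr (Module.Finite.tensorProduct ℤ H H)
  haveI : Module.Free ℤ (H ⊗[ℤ] H) :=
    int_free_congr (Module.Free.tensor (R := ℤ) (S := ℤ) (M := H) (N := H))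
  haveI : Module.Finite ℤ (H ⊗[ℤ] (H ⊗[ℤ] H)) :=
    int_finite_congr (Module.Finite.tensorProduct ℤ H (H ⊗[ℤ] H))
  haveI : Module.Free ℤ (H ⊗[ℤ] (H ⊗[ℤ] H)) :=
    int_free_congr (Module.Free.tensor (R := ℤ) (S := ℤ) (M := H) (N := H ⊗[ℤ] H))
  have hH : Module.finrank ℤ H = 2 * g := by
    rw [Module.finrank_eq_card_basis b]; simp [Fintype.card_sum]; ring
  have hHH : Module.finrank ℤ (H ⊗[ℤ] H) = (2 * g) * (2 * g) := by
    rw [int_finrank_congr _ (TensorProduct.leftModule), Module.finrank_tensorProduct, hH]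
  have hdom : Module.finrank ℤ (H ⊗[ℤ] (H ⊗[ℤ] H)) = (2 * g) ^ 3 := by
    rw [int_finrank_congr _ (TensorProduct.leftModule), Module.finrank_tensorProduct, hH, hHH]
    ring
  obtain ⟨n, bker⟩ := Submodule.basisOfPid (Module.Free.chooseBasis ℤ (H ⊗[ℤ] (H ⊗[ℤ] H)))
    (LinearMap.ker p)
  haveI : Module.Free ℤ (LinearMap.ker p) := Module.Free.of_basis bker
  refine ⟨inferInstance, ?_⟩
  haveI : Module.Finite ℤ (H × H) := int_finite_congr (Module.Finite.prod (M := H) (N := H))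
  haveI : Module.Free ℤ (H × H) := int_free_congr (Module.Free.prod (R := ℤ) (M := H) (N := H))
  haveI : Module.Finite ℤ (H × H × H) :=
    int_finite_congr (Module.Finite.prod (R := ℤ) (M := H) (N := H × H))
  haveI : Module.Free ℤ (H × H × H) := int_free_congr (Module.Free.prod (R := ℤ) (M := H) (N := H × H))
  have htgt2 : Module.finrank ℤ (H × H) = 2 * g + 2 * g := by
    rw [int_finrank_congr _ (Prod.instModule), Module.finrank_prod, hH]
  have htgt : Module.finrank ℤ (H × H × H) = 6 * g := by
    rw [int_finrank_congr _ (Prod.instModule), Module.finrank_prod, hH, htgt2]; ring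
  have hrank := LinearMap.rank_eq_of_surjective hsurj
  have hfin : Module.finrank ℤ (H ⊗[ℤ] (H ⊗[ℤ] H)) =
      Module.finrank ℤ (H × H × H) + Module.finrank ℤ (LinearMap.ker p) := by
    have h1 : Module.rank ℤ (H × H × H) < Cardinal.aleph0 := Module.rank_lt_aleph0 ℤ _
    have h2 : Module.rank ℤ (LinearMap.ker p) < Cardinal.aleph0 := by
      rw [← bker.mk_eq_rank'']; simp [Cardinal.mk_fintype]
    simp only [Module.finrank]
    rw [hrank, Cardinal.toNat_add h1 h2]
  omega
end

section
/- Let g ≥ 3, let H be the 𝔽₂-vector space with basis images of f₁,…,f_{2g+1} subject to f₁+⋯+f_{2g+1}=0, with S_{2g+1} permuting the fᵢ. Then the space of S_{2g+1}-invariant 𝔽₂-linear maps ψ : H^{⊗3} → 𝔽₂ is one-dimensional, spanned by the map ψ with ψ(f_i⊗f_j⊗f_k) = 0 if i,j,k are pairwise distinct or i=j=k, and ψ(f_i⊗f_j⊗f_k) = 1 otherwise (exactly two of the indices equal). -/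
/-! Write `T i j k = ψ (f i) (f j) (f k)`. Invariance makes `T` depend only on the pattern of
equalities among `i, j, k`, and killing `f₁ + ⋯ + f_n` in each slot makes every line sum of `T`
vanish. As `n` is odd, the line sum `∑ i, T i a a` is `T a a a` plus an even number of equal
terms, so `T a a a = 0`; for distinct `a, b, c` the line sums through `(a, b)` in the three
slots read `P + Q + E = P + R + E = Q + R + E = 0` (with `E = T a b c` and `P, Q, R` the three
values with exactly two equal indices), which forces `E = 0` and `P = Q = R`. Conversely `ψ₀`
kills `f₁ + ⋯ + f_n` because for fixed `j, k` the number of `i` with exactly two of `i, j, k`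
equal is `n - 1` or `2`, both even. -/

open Finset

/-- Exactly two of the three indices coincide. -/
def exactlyTwo {n : ℕ} (i j k : Fin n) : Prop :=
  (i = j ∧ i ≠ k) ∨ (i = k ∧ i ≠ j) ∨ (j = k ∧ i ≠ j)

instance {n : ℕ} (i j k : Fin n) : Decidable (exactlyTwo i j k) := by
  unfold exactlyTwo; infer_instance

/-- The trilinear form on the permutation module with `ψ₀(f_i⊗f_j⊗f_k) = 1` iff exactly two
of `i, j, k` coincide. -/
def psi0 {n : ℕ} (x y z : Fin n → ZMod 2) : ZMod 2 :=
  ∑ i, ∑ j, ∑ k, if exactlyTwo i j k then x i * y j * z k else 0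

/-- A trilinear map `ψ` on `V^{⊗3}` (for `V` the permutation module on `f₁,…,f_{2g+1}`)
descending to `H^{⊗3}` (i.e. killing the all-ones vector, which is the relation
`f₁+⋯+f_{2g+1}`, in each slot). -/
def IsInvTrilinear (n : ℕ) (ψ : (Fin n → ZMod 2) → (Fin n → ZMod 2) → (Fin n → ZMod 2) → ZMod 2) : Prop :=
  (∀ x x' y z, ψ (x + x') y z = ψ x y z + ψ x' y z) ∧
  (∀ x y y' z, ψ x (y + y') z = ψ x y z + ψ x y' z) ∧
  (∀ x y z z', ψ x y (z + z') = ψ x y z + ψ x y z') ∧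
  (ψ (fun _ => 1) = fun _ _ => 0) ∧
  (∀ x z, ψ x (fun _ => 1) z = 0) ∧
  (∀ x y, ψ x y (fun _ => 1) = 0) ∧
  (∀ (σ : Equiv.Perm (Fin n)) x y z, ψ (x ∘ σ) (y ∘ σ) (z ∘ σ) = ψ x y z)

open Equiv

section

variable {α : Type*} [Fintype α] [DecidableEq α]

lemma sum_eq_sum_add_card_compl_nsmul {M : Type*} [AddCommMonoid M] (f : α → M) (s : Finset α)
    (c : M) (h : ∀ i ∉ s, f i = c) : ∑ i, f i = ∑ i ∈ s, f i + #sᶜ • c := by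
  rw [← sum_add_sum_compl s f, sum_congr rfl fun i hi => h i (mem_compl.1 hi), sum_const]

lemma eq_sum_mul_single (f : (α → ZMod 2) → ZMod 2) (hf : ∀ x x', f (x + x') = f x + f x')
    (x : α → ZMod 2) : f x = ∑ i, x i * f (Pi.single i 1) := by
  have := LinearMap.pi_apply_eq_sum_univ ((AddMonoidHom.mk' f hf).toZModLinearMap 2) x
  have hsingle (i : α) :
      (fun j => if i = j then (1 : ZMod 2) else 0) = (Pi.single i 1 : α → ZMod 2) := by
    ext j; simp [Pi.single_apply, eq_comm]
  simp only [smul_eq_mul, hsingle] at this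
  exact this

lemma sum_apply_single_eq_zero (f : (α → ZMod 2) → ZMod 2)
    (hf : ∀ x x', f (x + x') = f x + f x') (h1 : f (fun _ => 1) = 0) :
    ∑ i, f (Pi.single i 1) = 0 := by
  simpa using (eq_sum_mul_single f hf (fun _ => 1)).symm.trans h1

end

lemma exists_perm_apply_eq_apply_eq {β : Type*} [DecidableEq β] {a b a' b' : β} (hab : a ≠ b)
    (hab' : a' ≠ b') :
    ∃ σ : Perm β, σ a = a' ∧ σ b = b' := by
  set τ := swap a a'
  have hτ : τ b ≠ a' := by rw [← swap_apply_left a a']; exact τ.injective.ne hab.symm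
  refine ⟨swap (τ b) b' * τ, ?_, ?_⟩
  · simp [τ, swap_apply_of_ne_of_ne hτ.symm hab']
  · simp

def IsPermInvariant {α M : Type*} (T : α → α → α → M) : Prop :=
  ∀ (σ : Perm α) i j k, T (σ i) (σ j) (σ k) = T i j k

namespace IsPermInvariant

variable {α : Type*} [DecidableEq α] {T : α → α → α → ZMod 2}

lemma apply_eq_of_ne (hT : IsPermInvariant T) {i c j k : α} (hij : i ≠ j) (hik : i ≠ k)
    (hcj : c ≠ j) (hck : c ≠ k) : T i j k = T c j k := by
  simpa [swap_apply_of_ne_of_ne hij.symm hcj.symm, swap_apply_of_ne_of_ne hik.symm hck.symm]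
    using (hT (swap i c) i j k).symm

variable [Fintype α]

lemma apply_self_eq_zero (hT : IsPermInvariant T) (hα : Odd (Fintype.card α)) {a b : α}
    (hab : a ≠ b) (hsum : ∑ i, T i a a = 0) : T a a a = 0 := by
  have hcard : ((#({a} : Finset α)ᶜ : ℕ) : ZMod 2) = 0 := by
    rw [card_compl, card_singleton, ZMod.natCast_eq_zero_iff_even]
    exact Nat.Odd.sub_odd hα odd_one
  have hoff (i : α) (hi : i ∉ ({a} : Finset α)) : T i a a = T b a a := by
    rw [mem_singleton] at hi
    exact hT.apply_eq_of_ne hi hi hab.symm hab.symm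
  rw [sum_eq_sum_add_card_compl_nsmul _ {a} (T b a a) hoff, nsmul_eq_mul, hcard, zero_mul,
    add_zero, sum_singleton] at hsum
  exact hsum

lemma add_add_eq_zero (hT : IsPermInvariant T) (hα : Odd (Fintype.card α)) {a b c : α}
    (hab : a ≠ b) (hca : c ≠ a) (hcb : c ≠ b) (hsum : ∑ i, T i a b = 0) :
    T a a b + T b a b + T c a b = 0 := by
  have hcard : ((#({a, b} : Finset α)ᶜ : ℕ) : ZMod 2) = 1 := by
    rw [card_compl, card_pair hab, ZMod.natCast_eq_one_iff_odd]
    have := card_le_univ ({a, b} : Finset α)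
    rw [card_pair hab] at this
    exact Nat.Odd.sub_even this hα even_two
  have hoff (i : α) (hi : i ∉ ({a, b} : Finset α)) : T i a b = T c a b := by
    simp only [mem_insert, mem_singleton, not_or] at hi
    exact hT.apply_eq_of_ne hi.1 hi.2 hca hcb
  rw [sum_eq_sum_add_card_compl_nsmul _ {a, b} (T c a b) hoff, nsmul_eq_mul, hcard, one_mul,
    sum_pair hab] at hsum
  exact hsum

lemma apply_of_pairwise_ne (hT : IsPermInvariant T) (hα : Odd (Fintype.card α))
    (hsum₁ : ∀ j k, ∑ i, T i j k = 0) (hsum₂ : ∀ i k, ∑ j, T i j k = 0)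
    (hsum₃ : ∀ i j, ∑ k, T i j k = 0) {a b c : α} (hab : a ≠ b) (hca : c ≠ a)
    (hcb : c ≠ b) :
    T a b c = 0 ∧ T a a b = T a b a ∧ T a b a = T b a a := by
  have h₁ := hT.add_add_eq_zero hα hab hca hcb (hsum₁ a b)
  have h₂ := add_add_eq_zero (T := fun i j k => T j i k) (fun σ i j k => hT σ j i k) hα
    hab hca hcb (hsum₂ a b)
  have h₃ := add_add_eq_zero (T := fun i j k => T j k i) (fun σ i j k => hT σ j k i) hα
    hab hca hcb (hsum₃ a b)
  have hbab : T b a b = T a b a := by simpa using hT (swap a b) a b a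
  have habb : T a b b = T b a a := by simpa using hT (swap a b) b a a
  have hacb : T a c b = T a b c := by
    simpa [swap_apply_of_ne_of_ne hab hca.symm] using hT (swap b c) a b c
  have hcab : T c a b = T a b c := by
    rw [← hacb]
    simpa [swap_apply_of_ne_of_ne hab.symm hcb.symm] using hT (swap a c) a c b
  rw [hbab, hcab] at h₁
  rw [habb, hacb] at h₂
  rw [habb] at h₃
  have key : ∀ P Q R E : ZMod 2, P + Q + E = 0 → P + R + E = 0 → Q + R + E = 0 →
      E = 0 ∧ P = Q ∧ Q = R := by decide
  exact key _ _ _ _ h₁ h₂ h₃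

end IsPermInvariant

lemma IsPermInvariant.exists_eq_ite_exactlyTwo {n : ℕ} {T : Fin n → Fin n → Fin n → ZMod 2}
    (hT : IsPermInvariant T) (hn : Odd n) (h3 : 3 ≤ n)
    (hsum₁ : ∀ j k, ∑ i, T i j k = 0) (hsum₂ : ∀ i k, ∑ j, T i j k = 0)
    (hsum₃ : ∀ i j, ∑ k, T i j k = 0) :
    ∃ c, ∀ i j k, T i j k = if exactlyTwo i j k then c else 0 := by
  have hα : Odd (Fintype.card (Fin n)) := by rwa [Fintype.card_fin]
  have h3' : 3 ≤ ENat.card (Fin n) := by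
    simp only [ENat.card_eq_coe_fintype_card, Fintype.card_fin]
    exact_mod_cast h3
  have hdistinct {a b c : Fin n} (hab : a ≠ b) (hca : c ≠ a) (hcb : c ≠ b) : T a b c = 0 :=
    (hT.apply_of_pairwise_ne hα hsum₁ hsum₂ hsum₃ hab hca hcb).1
  have hdiag (a : Fin n) : T a a a = 0 := by
    obtain ⟨b, hba, -⟩ := ENat.exists_ne_ne_of_three_le h3' a a
    exact hT.apply_self_eq_zero hα hba.symm (hsum₁ a a)
  let p₀ : Fin n := ⟨0, by omega⟩
  let p₁ : Fin n := ⟨1, by omega⟩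
  have hpair {a b : Fin n} (hab : a ≠ b) :
      T a a b = T p₀ p₀ p₁ ∧ T a b a = T p₀ p₀ p₁ ∧ T b a a = T p₀ p₀ p₁ := by
    have hp : p₀ ≠ p₁ := by simp [p₀, p₁]
    obtain ⟨σ, rfl, rfl⟩ := exists_perm_apply_eq_apply_eq hp hab
    obtain ⟨c, hca, hcb⟩ := ENat.exists_ne_ne_of_three_le h3' (σ p₀) (σ p₁)
    obtain ⟨-, h₁, h₂⟩ := hT.apply_of_pairwise_ne hα hsum₁ hsum₂ hsum₃ hab hca hcb
    have h₀ := hT σ p₀ p₀ p₁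
    exact ⟨h₀, h₁ ▸ h₀, h₂ ▸ h₁ ▸ h₀⟩
  refine ⟨T p₀ p₀ p₁, fun i j k => ?_⟩
  rcases eq_or_ne i j with rfl | hij
  · rcases eq_or_ne i k with rfl | hik
    · simp [exactlyTwo, hdiag]
    · simp [exactlyTwo, hik, (hpair hik).1]
  · rcases eq_or_ne i k with rfl | hik
    · simp [exactlyTwo, hij, (hpair hij).2.1]
    · rcases eq_or_ne j k with rfl | hjk
      · simp [exactlyTwo, hij, (hpair hij.symm).2.2]
      · simp [exactlyTwo, hij, hik, hjk, hdistinct hij (Ne.symm hik) (Ne.symm hjk)]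

section Psi0

variable {n : ℕ}

lemma exactlyTwo_comm12 (i j k : Fin n) : exactlyTwo j i k ↔ exactlyTwo i j k := by
  unfold exactlyTwo; grind

lemma exactlyTwo_comm23 (i j k : Fin n) : exactlyTwo i k j ↔ exactlyTwo i j k := by
  unfold exactlyTwo; grind

lemma exactlyTwo_apply_perm (σ : Perm (Fin n)) (i j k : Fin n) :
    exactlyTwo (σ i) (σ j) (σ k) ↔ exactlyTwo i j k := by
  simp [exactlyTwo]

lemma card_filter_exactlyTwo (j k : Fin n) :
    #{i | exactlyTwo i j k} = if j = k then n - 1 else 2 := by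
  split_ifs with hjk
  · subst hjk
    rw [filter_congr fun i _ => show exactlyTwo i j j ↔ i ≠ j by unfold exactlyTwo; grind,
      filter_ne', card_erase_of_mem (mem_univ j), card_univ, Fintype.card_fin]
  · have hpair (i : Fin n) : exactlyTwo i j k ↔ i = j ∨ i = k := by unfold exactlyTwo; grind
    rw [filter_congr fun i _ => hpair i, filter_or, filter_eq', filter_eq', if_pos (mem_univ j),
      if_pos (mem_univ k)]
    exact card_pair hjk

lemma psi0_comm12 (x y z : Fin n → ZMod 2) : psi0 y x z = psi0 x y z := by
  unfold psi0
  rw [sum_comm]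
  refine sum_congr rfl fun i _ => sum_congr rfl fun j _ => sum_congr rfl fun k _ => ?_
  exact if_congr (exactlyTwo_comm12 i j k) (by rw [mul_comm (y j)]) rfl

lemma psi0_comm23 (x y z : Fin n → ZMod 2) : psi0 x z y = psi0 x y z := by
  unfold psi0
  refine sum_congr rfl fun i _ => ?_
  rw [sum_comm]
  refine sum_congr rfl fun j _ => sum_congr rfl fun k _ => ?_
  exact if_congr (exactlyTwo_comm23 i j k) (mul_right_comm _ _ _) rfl

lemma psi0_add_left (x x' y z : Fin n → ZMod 2) :
    psi0 (x + x') y z = psi0 x y z + psi0 x' y z := by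
  simp only [psi0, Pi.add_apply, add_mul, ← sum_add_distrib, ite_add_zero]

lemma psi0_ones_left (hn : Odd n) (y z : Fin n → ZMod 2) : psi0 (fun _ => 1) y z = 0 := by
  unfold psi0
  rw [sum_comm]
  refine sum_eq_zero fun j _ => ?_
  rw [sum_comm]
  refine sum_eq_zero fun k _ => ?_
  have heven : ((#{i | exactlyTwo i j k} : ℕ) : ZMod 2) = 0 := by
    rw [card_filter_exactlyTwo, ZMod.natCast_eq_zero_iff_even]
    split_ifs
    · exact Nat.Odd.sub_odd hn odd_one
    · exact even_two
  rw [← sum_filter, sum_const, nsmul_eq_mul, heven, zero_mul]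

lemma psi0_comp_perm (σ : Perm (Fin n)) (x y z : Fin n → ZMod 2) :
    psi0 (x ∘ σ) (y ∘ σ) (z ∘ σ) = psi0 x y z := by
  unfold psi0
  refine Fintype.sum_equiv σ _ _ fun i => Fintype.sum_equiv σ _ _ fun j =>
    Fintype.sum_equiv σ _ _ fun k => ?_
  simp only [Function.comp_apply, exactlyTwo_apply_perm]

end Psi0

namespace IsInvTrilinear

variable {n : ℕ}
  {ψ : (Fin n → ZMod 2) → (Fin n → ZMod 2) → (Fin n → ZMod 2) → ZMod 2}

lemma of_symmetric (hadd : ∀ x x' y z, ψ (x + x') y z = ψ x y z + ψ x' y z)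
    (hones : ∀ y z, ψ (fun _ => 1) y z = 0)
    (hperm : ∀ (σ : Perm (Fin n)) x y z, ψ (x ∘ σ) (y ∘ σ) (z ∘ σ) = ψ x y z)
    (h₁₂ : ∀ x y z, ψ y x z = ψ x y z) (h₂₃ : ∀ x y z, ψ x z y = ψ x y z) :
    IsInvTrilinear n ψ := by
  have h₁₃ (x y z) : ψ z y x = ψ x y z := by rw [← h₂₃, h₁₂, h₂₃]
  refine ⟨hadd, fun x y y' z => ?_, fun x y z z' => ?_, funext₂ hones, fun x z => ?_,
    fun x y => ?_, hperm⟩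
  · simp only [← h₁₂ x, hadd]
  · simp only [← h₁₃ x, hadd]
  · rw [← h₁₂, hones]
  · rw [← h₁₃, hones]

lemma apply_eq_sum (hψ : IsInvTrilinear n ψ) (x y z : Fin n → ZMod 2) :
    ψ x y z = ∑ i, ∑ j, ∑ k,
      x i * y j * z k * ψ (Pi.single i 1) (Pi.single j 1) (Pi.single k 1) := by
  obtain ⟨hadd₁, hadd₂, hadd₃, -⟩ := hψ
  rw [eq_sum_mul_single (ψ · y z) (hadd₁ · · y z)]
  refine sum_congr rfl fun i _ => ?_
  rw [eq_sum_mul_single (ψ _ · z) (hadd₂ _ · · z), mul_sum]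
  refine sum_congr rfl fun j _ => ?_
  rw [eq_sum_mul_single (ψ _ _ ·) (hadd₃ _ _ · ·), mul_sum, mul_sum]
  refine sum_congr rfl fun k _ => ?_
  ring

lemma isPermInvariant (hψ : IsInvTrilinear n ψ) :
    IsPermInvariant fun i j k => ψ (Pi.single i 1) (Pi.single j 1) (Pi.single k 1) := by
  obtain ⟨-, -, -, -, -, -, hperm⟩ := hψ
  intro σ i j k
  have hcomp (a : Fin n) : (Pi.single (σ a) 1 : Fin n → ZMod 2) ∘ σ = Pi.single a 1 := by
    ext b; simp [Pi.single_apply]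
  simpa only [hcomp] using
    (hperm σ (Pi.single (σ i) 1) (Pi.single (σ j) 1) (Pi.single (σ k) 1)).symm

lemma exists_eq_mul_psi0 (hψ : IsInvTrilinear n ψ) (hn : Odd n) (h3 : 3 ≤ n) :
    ∃ c, ∀ x y z, ψ x y z = c * psi0 x y z := by
  have hexp := hψ.apply_eq_sum
  have hT := hψ.isPermInvariant
  obtain ⟨hadd₁, hadd₂, hadd₃, hones₁, hones₂, hones₃, -⟩ := hψ
  obtain ⟨c, hc⟩ := hT.exists_eq_ite_exactlyTwo hn h3
    (fun j k => sum_apply_single_eq_zero (ψ · _ _) (hadd₁ · · _ _) (congrFun₂ hones₁ _ _))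
    (fun i k => sum_apply_single_eq_zero (ψ _ · _) (hadd₂ _ · · _) (hones₂ _ _))
    (fun i j => sum_apply_single_eq_zero (ψ _ _ ·) (hadd₃ _ _ · ·) (hones₃ _ _))
  refine ⟨c, fun x y z => ?_⟩
  simp only [hexp x y z, hc, psi0, mul_sum]
  refine sum_congr rfl fun i _ => sum_congr rfl fun j _ => sum_congr rfl fun k _ => ?_
  split_ifs <;> ring

end IsInvTrilinear

lemma isInvTrilinear_psi0 {n : ℕ} (hn : Odd n) : IsInvTrilinear n psi0 :=
  .of_symmetric psi0_add_left (psi0_ones_left hn) psi0_comp_perm psi0_comm12 psi0_comm23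

/-- For `g ≥ 3`, the space of `S_{2g+1}`-invariant linear maps `H^{⊗3} → 𝔽₂` is
one-dimensional, spanned by `ψ₀`. -/
theorem stmt10 (g : ℕ) (hg : 3 ≤ g) :
    IsInvTrilinear (2 * g + 1) psi0 ∧
    ∀ ψ, IsInvTrilinear (2 * g + 1) ψ →
      (∀ x y z, ψ x y z = 0) ∨ (∀ x y z, ψ x y z = psi0 x y z) := by
  have hn : Odd (2 * g + 1) := odd_two_mul_add_one g
  refine ⟨isInvTrilinear_psi0 hn, fun ψ hψ => ?_⟩
  obtain ⟨c, hc⟩ := hψ.exists_eq_mul_psi0 hn (by omega)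
  rcases (by decide : ∀ c : ZMod 2, c = 0 ∨ c = 1) c with rfl | rfl
  · exact .inl fun x y z => by rw [hc, zero_mul]
  · exact .inr fun x y z => by rw [hc, one_mul]
end

section
/- Let g ≥ 3 and let H, ψ be as follows: H is the 𝔽₂-vector space spanned by f₁,…,f_{2g+1} with relation Σfᵢ = 0, and ψ : H^{⊗3} → 𝔽₂ is the linear map with ψ(f_i⊗f_j⊗f_k) equal to 1 exactly when precisely two of i,j,k coincide, and 0 otherwise. Let σ act on H by σ(f_i) = f₁ + f_i for i = 2,…,2g+1 and σ(f₁) = f₁. If ψ is σ-invariant on H^{⊗3}, then ψ(f_j⊗f_i⊗f_i) = 0 for all i ≠ j would be forced; since instead ψ(f_j⊗f_i⊗f_i) = 1, ψ is not σ-invariant. Conclude: the space of S_{2g+2}-invariant linear maps H^{⊗3} → 𝔽₂ is zero, where S_{2g+2} acts via permutations of e₀,…,e_{2g+1} with f_i = e₀ + e_i. -/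
/-!
Write `f_i = e₀ + e_i`, so that `f₀ = 0` and the `f_i` span the sum-zero vectors; it suffices to
show `ψ(f_a, f_b, f_c) = 0`. Permutations fixing the letter `0` permute the `f_i`, and they act
multiply transitively on the other letters, so `ψ(f_a, f_b, f_c)` only depends on which of the
nonzero letters `a, b, c` coincide: five unknowns `A, B₁, B₂, B₃, C`. As `2g + 2` is even,
`∑ᵢ f_i` is the all-ones vector, which `ψ` kills in every slot; counting the letters in these sums
gives `C = 0` and `A = B₂ + B₃ = B₁ + B₂ = B₁ + B₃`. Finally the transposition `(0 a)` maps `f_b`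
to `f_a + f_b`, and expanding gives `A + B₁ + B₂ + B₃ + C = 0`, so everything vanishes.
-/

open Finset

section fVec

variable {n : ℕ} [NeZero n]

def fVec (i : Fin n) : Fin n → ZMod 2 := Pi.single 0 1 + Pi.single i 1

@[simp] theorem fVec_zero : fVec (0 : Fin n) = 0 := CharTwo.add_self_eq_zero _

theorem sum_coords_fVec (i : Fin n) : ∑ j, fVec i j = 0 := by
  simp only [fVec, Pi.add_apply, sum_add_distrib, sum_pi_single', mem_univ, if_true]
  exact CharTwo.add_self_eq_zero 1

theorem sum_fVec (hn : Even n) : ∑ i, fVec (n := n) i = fun _ => 1 := by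
  ext j
  simp [fVec, Finset.sum_apply, Pi.single_apply, sum_add_distrib,
    ZMod.natCast_eq_zero_iff_even.2 hn]

theorem eq_sum_smul_fVec {x : Fin n → ZMod 2} (hx : ∑ i, x i = 0) : x = ∑ i, x i • fVec i := by
  ext j
  simp [fVec, Finset.sum_apply, Pi.single_apply, smul_add, sum_add_distrib, hx]

theorem fVec_comp_perm {σ : Equiv.Perm (Fin n)} (hσ : σ 0 = 0) (i : Fin n) :
    fVec i ∘ σ = fVec (σ.symm i) := by
  ext j
  simp only [fVec, Function.comp_apply, Pi.add_apply, Pi.single_apply, ← Equiv.eq_symm_apply,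
    σ.symm_apply_eq.2 hσ.symm]

theorem fVec_comp_swap_zero {a b : Fin n} (ha : a ≠ 0) (hab : a ≠ b) :
    fVec a ∘ Equiv.swap 0 b = fVec a + fVec b := by
  ext j
  simp only [fVec, Function.comp_apply, Pi.add_apply, Pi.single_apply, Equiv.swap_apply_eq_iff,
    Equiv.swap_apply_left, Equiv.swap_apply_of_ne_of_ne ha hab]
  split_ifs <;> decide

end fVec

structure IsInvariantTrilinearForm {n : ℕ}
    (ψ : (Fin n → ZMod 2) → (Fin n → ZMod 2) → (Fin n → ZMod 2) → ZMod 2) : Prop where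
  add_left : ∀ x x' y z, ψ (x + x') y z = ψ x y z + ψ x' y z
  add_mid : ∀ x y y' z, ψ x (y + y') z = ψ x y z + ψ x y' z
  add_right : ∀ x y z z', ψ x y (z + z') = ψ x y z + ψ x y z'
  one_left : ∀ y z, ψ (fun _ => 1) y z = 0
  one_mid : ∀ x z, ψ x (fun _ => 1) z = 0
  one_right : ∀ x y, ψ x y (fun _ => 1) = 0
  comp_perm : ∀ (σ : Equiv.Perm (Fin n)) (x y z : Fin n → ZMod 2),
    ∑ i, x i = 0 → ∑ i, y i = 0 → ∑ i, z i = 0 → ψ (x ∘ σ) (y ∘ σ) (z ∘ σ) = ψ x y z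

namespace IsInvariantTrilinearForm

variable {n : ℕ} {ψ : (Fin n → ZMod 2) → (Fin n → ZMod 2) → (Fin n → ZMod 2) → ZMod 2}

theorem rotate (hψ : IsInvariantTrilinearForm ψ) :
    IsInvariantTrilinearForm (fun x y z => ψ y z x) where
  add_left x x' y z := hψ.add_right y z x x'
  add_mid x y y' z := hψ.add_left y y' z x
  add_right x y z z' := hψ.add_mid y z z' x
  one_left y z := hψ.one_right y z
  one_mid x z := hψ.one_left z x
  one_right x y := hψ.one_mid y x
  comp_perm σ x y z hx hy hz := hψ.comp_perm σ y z x hy hz hx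

def leftHom (hψ : IsInvariantTrilinearForm ψ) (y z : Fin n → ZMod 2) :
    (Fin n → ZMod 2) →+ ZMod 2 :=
  AddMonoidHom.mk' (ψ · y z) (hψ.add_left · · y z)

theorem apply_zero_left (hψ : IsInvariantTrilinearForm ψ) (y z : Fin n → ZMod 2) :
    ψ 0 y z = 0 :=
  map_zero (hψ.leftHom y z)

variable [NeZero n]

theorem apply_fVec_perm (hψ : IsInvariantTrilinearForm ψ) {σ : Equiv.Perm (Fin n)}
    (hσ : σ 0 = 0) (a b c : Fin n) :
    ψ (fVec (σ a)) (fVec (σ b)) (fVec (σ c)) = ψ (fVec a) (fVec b) (fVec c) := by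
  have hσ' : σ.symm 0 = 0 := σ.symm_apply_eq.2 hσ.symm
  have := hψ.comp_perm σ.symm (fVec a) (fVec b) (fVec c)
    (sum_coords_fVec a) (sum_coords_fVec b) (sum_coords_fVec c)
  rwa [fVec_comp_perm hσ', fVec_comp_perm hσ', fVec_comp_perm hσ', Equiv.symm_symm] at this

theorem apply_fVec_eq_of_injective (hψ : IsInvariantTrilinearForm ψ) {k : ℕ}
    {x y : Fin (k + 1) → Fin n} (hx : Function.Injective x) (hy : Function.Injective y)
    (hx0 : x 0 = 0) (hy0 : y 0 = 0) (i j l : Fin (k + 1)) :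
    ψ (fVec (x i)) (fVec (x j)) (fVec (x l)) = ψ (fVec (y i)) (fVec (y j)) (fVec (y l)) := by
  obtain ⟨σ, hσ⟩ := Equiv.Perm.exists_extending_pair x y hx hy
  rw [← hσ i, ← hσ j, ← hσ l, hψ.apply_fVec_perm (by simpa [hx0, hy0] using hσ 0)]

theorem exists_apply_fVec_eq_ite (hψ : IsInvariantTrilinearForm ψ) (h4 : 4 ≤ n) :
    ∃ A B₁ B₂ B₃ C : ZMod 2, ∀ a b c : Fin n, a ≠ 0 → b ≠ 0 → c ≠ 0 →
      ψ (fVec a) (fVec b) (fVec c) =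
        if a = b then (if a = c then C else B₃)
        else if a = c then B₂ else if b = c then B₁ else A := by
  obtain ⟨o, ho, ho0⟩ : ∃ o : Fin 4 → Fin n, Function.Injective o ∧ o 0 = 0 :=
    ⟨Fin.castLE h4, Fin.castLE_injective h4, Fin.ext (by simp)⟩
  have hy₁ : Function.Injective ![0, o 1] := by
    intro i j; fin_cases i <;> fin_cases j <;> simp [ho.eq_iff, ← ho0]
  have hy₂ : Function.Injective ![0, o 1, o 2] := by
    intro i j; fin_cases i <;> fin_cases j <;> simp [ho.eq_iff, ← ho0]
  have hy₃ : Function.Injective ![0, o 1, o 2, o 3] := by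
    intro i j; fin_cases i <;> fin_cases j <;> simp [ho.eq_iff, ← ho0]
  refine ⟨ψ (fVec (o 1)) (fVec (o 2)) (fVec (o 3)), ψ (fVec (o 1)) (fVec (o 2)) (fVec (o 2)),
    ψ (fVec (o 1)) (fVec (o 2)) (fVec (o 1)), ψ (fVec (o 1)) (fVec (o 1)) (fVec (o 2)),
    ψ (fVec (o 1)) (fVec (o 1)) (fVec (o 1)), fun a b c ha hb hc => ?_⟩
  split_ifs with hab hac hac hbc
  · subst hab hac
    have hx : Function.Injective ![0, a] := by
      intro i j; fin_cases i <;> fin_cases j <;> simp [*, eq_comm]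
    exact hψ.apply_fVec_eq_of_injective hx hy₁ rfl rfl 1 1 1
  · subst hab
    have hx : Function.Injective ![0, a, c] := by
      intro i j; fin_cases i <;> fin_cases j <;> simp [*, eq_comm]
    exact hψ.apply_fVec_eq_of_injective hx hy₂ rfl rfl 1 1 2
  · subst hac
    have hx : Function.Injective ![0, a, b] := by
      intro i j; fin_cases i <;> fin_cases j <;> simp [*, eq_comm]
    exact hψ.apply_fVec_eq_of_injective hx hy₂ rfl rfl 1 2 1
  · subst hbc
    have hx : Function.Injective ![0, a, b] := by
      intro i j; fin_cases i <;> fin_cases j <;> simp [*, eq_comm]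
    exact hψ.apply_fVec_eq_of_injective hx hy₂ rfl rfl 1 2 2
  · have hx : Function.Injective ![0, a, b, c] := by
      intro i j; fin_cases i <;> fin_cases j <;> simp [*, eq_comm]
    exact hψ.apply_fVec_eq_of_injective hx hy₃ rfl rfl 1 2 3

theorem sum_apply_fVec_left (hψ : IsInvariantTrilinearForm ψ) (hn : Even n)
    (y z : Fin n → ZMod 2) : ∑ i, ψ (fVec i) y z = 0 := by
  change ∑ i, hψ.leftHom y z (fVec i) = 0
  rw [← map_sum, sum_fVec hn]
  exact hψ.one_left y z

theorem sum_compl_apply_fVec_left (hψ : IsInvariantTrilinearForm ψ) {S : Finset (Fin n)}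
    {a b c : Fin n} (h0 : 0 ∈ S) (hb : b ∈ S) (hc : c ∈ S) (ha : a ∉ S) :
    ∑ i ∈ Sᶜ, ψ (fVec i) (fVec b) (fVec c) = #Sᶜ • ψ (fVec a) (fVec b) (fVec c) := by
  rw [← sum_const]
  refine sum_congr rfl fun i hi => ?_
  have hi : i ∉ S := mem_compl.1 hi
  have fix : ∀ j ∈ S, Equiv.swap i a j = j := fun j hj =>
    Equiv.swap_apply_of_ne_of_ne (ne_of_mem_of_not_mem hj hi) (ne_of_mem_of_not_mem hj ha)
  have := hψ.apply_fVec_perm (σ := Equiv.swap i a) (fix 0 h0) i b c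
  rw [Equiv.swap_apply_left, fix b hb, fix c hc] at this
  exact this.symm

theorem sum_apply_fVec_left_add_card_smul (hψ : IsInvariantTrilinearForm ψ) (hn : Even n)
    {S : Finset (Fin n)} {a b c : Fin n} (h0 : 0 ∈ S) (hb : b ∈ S) (hc : c ∈ S) (ha : a ∉ S) :
    ∑ i ∈ S, ψ (fVec i) (fVec b) (fVec c) + #S • ψ (fVec a) (fVec b) (fVec c) = 0 := by
  have hsum := hψ.sum_apply_fVec_left hn (fVec b) (fVec c)
  rw [← sum_add_sum_compl S, hψ.sum_compl_apply_fVec_left h0 hb hc ha] at hsum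
  have hpar : (#Sᶜ : ZMod 2) = #S := by
    have := card_compl_add_card S
    rw [Fintype.card_fin] at this
    rw [ZMod.natCast_eq_natCast_iff']
    rcases hn with ⟨m, hm⟩
    omega
  rwa [nsmul_eq_mul, hpar, ← nsmul_eq_mul] at hsum

theorem apply_fVec_self_eq_zero (hψ : IsInvariantTrilinearForm ψ) (hn : Even n) {a c : Fin n}
    (ha : a ≠ 0) (hc : c ≠ 0) (hac : a ≠ c) : ψ (fVec c) (fVec c) (fVec c) = 0 := by
  have := hψ.sum_apply_fVec_left_add_card_smul hn (S := {0, c}) (a := a) (b := c) (c := c)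
    (by simp) (by simp) (by simp) (by simp [ha, hac])
  rw [sum_pair hc.symm, card_pair hc.symm, fVec_zero, hψ.apply_zero_left] at this
  grind

theorem apply_fVec_left_eq (hψ : IsInvariantTrilinearForm ψ) (hn : Even n) {a b c : Fin n}
    (ha : a ≠ 0) (hb : b ≠ 0) (hc : c ≠ 0) (hab : a ≠ b) (hac : a ≠ c) (hbc : b ≠ c) :
    ψ (fVec a) (fVec b) (fVec c) =
      ψ (fVec b) (fVec b) (fVec c) + ψ (fVec c) (fVec b) (fVec c) := by
  have h0 : (0 : Fin n) ∉ ({b, c} : Finset (Fin n)) := by simp [hb.symm, hc.symm]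
  have := hψ.sum_apply_fVec_left_add_card_smul hn (S := {0, b, c}) (a := a) (b := b) (c := c)
    (by simp) (by simp) (by simp) (by simp [ha, hab, hac])
  rw [sum_insert h0, sum_pair hbc, card_insert_of_notMem h0, card_pair hbc, fVec_zero,
    hψ.apply_zero_left] at this
  grind

theorem apply_add_fVec_eq (hψ : IsInvariantTrilinearForm ψ) {a b c d : Fin n} (hb : b ≠ 0)
    (hc : c ≠ 0) (hd : d ≠ 0) (hba : b ≠ a) (hca : c ≠ a) (hda : d ≠ a) :
    ψ (fVec b + fVec a) (fVec c + fVec a) (fVec d + fVec a) = ψ (fVec b) (fVec c) (fVec d) := by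
  have := hψ.comp_perm (Equiv.swap 0 a) (fVec b) (fVec c) (fVec d)
    (sum_coords_fVec b) (sum_coords_fVec c) (sum_coords_fVec d)
  rwa [fVec_comp_swap_zero hb hba, fVec_comp_swap_zero hc hca, fVec_comp_swap_zero hd hda] at this

theorem apply_fVec_eq_zero (hψ : IsInvariantTrilinearForm ψ) (hn : Even n) (h5 : 5 ≤ n)
    {a b c : Fin n} (ha : a ≠ 0) (hb : b ≠ 0) (hc : c ≠ 0) :
    ψ (fVec a) (fVec b) (fVec c) = 0 := by
  obtain ⟨A, B₁, B₂, B₃, C, hT⟩ := hψ.exists_apply_fVec_eq_ite (by omega)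
  obtain ⟨o, ho, ho0⟩ : ∃ o : Fin 5 → Fin n, Function.Injective o ∧ o 0 = 0 :=
    ⟨Fin.castLE h5, Fin.castLE_injective h5, Fin.ext (by simp)⟩
  have e0 := hψ.apply_fVec_self_eq_zero hn (a := o 2) (c := o 1)
  have e1 := hψ.apply_fVec_left_eq hn (a := o 1) (b := o 2) (c := o 3)
  have e2 := hψ.rotate.apply_fVec_left_eq hn (a := o 1) (b := o 2) (c := o 3)
  have e3 := hψ.rotate.rotate.apply_fVec_left_eq hn (a := o 1) (b := o 2) (c := o 3)
  have e4 := hψ.apply_add_fVec_eq (a := o 1) (b := o 2) (c := o 3) (d := o 4)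
  simp only [hψ.add_left, hψ.add_mid, hψ.add_right] at e4
  simp [hT, ho.eq_iff, ← ho0] at e0 e1 e2 e3 e4
  have hA : A = 0 := by grind
  have hB : B₁ = 0 ∧ B₂ = 0 ∧ B₃ = 0 := by grind
  rw [hT a b c ha hb hc]
  split_ifs <;> simp [e0, hA, hB]

theorem eq_zero_of_apply_fVec_left (hψ : IsInvariantTrilinearForm ψ) {x y z : Fin n → ZMod 2}
    (h : ∀ i, i ≠ 0 → ψ (fVec i) y z = 0) (hx : ∑ i, x i = 0) : ψ x y z = 0 := by
  change hψ.leftHom y z x = 0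
  rw [eq_sum_smul_fVec hx, map_sum]
  refine sum_eq_zero fun i _ => ?_
  rw [ZMod.map_smul]
  rcases eq_or_ne i 0 with rfl | hi
  · simp
  · simp [leftHom, h i hi]

theorem eq_zero_of_apply_fVec (hψ : IsInvariantTrilinearForm ψ)
    (h : ∀ a b c, a ≠ 0 → b ≠ 0 → c ≠ 0 → ψ (fVec a) (fVec b) (fVec c) = 0)
    {x y z : Fin n → ZMod 2} (hx : ∑ i, x i = 0) (hy : ∑ i, y i = 0) (hz : ∑ i, z i = 0) :
    ψ x y z = 0 := by
  have hffz : ∀ a b, a ≠ 0 → b ≠ 0 → ψ (fVec a) (fVec b) z = 0 := fun a b ha hb =>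
    hψ.rotate.eq_zero_of_apply_fVec_left (fun c hc => h a b c ha hb hc) hz
  have hxfz : ∀ b, b ≠ 0 → ψ x (fVec b) z = 0 := fun b hb =>
    hψ.eq_zero_of_apply_fVec_left (fun a ha => hffz a b ha hb) hx
  exact hψ.rotate.rotate.eq_zero_of_apply_fVec_left hxfz hy

end IsInvariantTrilinearForm

/-- `H` is modelled by the sum-zero vectors modulo the all-ones vector, which `ψ` kills in each
slot. -/
theorem stmt11 (g : ℕ) (hg : 3 ≤ g)
    (ψ : (Fin (2 * g + 2) → ZMod 2) → (Fin (2 * g + 2) → ZMod 2) →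
      (Fin (2 * g + 2) → ZMod 2) → ZMod 2)
    (add1 : ∀ x x' y z, ψ (x + x') y z = ψ x y z + ψ x' y z)
    (add2 : ∀ x y y' z, ψ x (y + y') z = ψ x y z + ψ x y' z)
    (add3 : ∀ x y z z', ψ x y (z + z') = ψ x y z + ψ x y z')
    (rel1 : ∀ y z, ψ (fun _ => 1) y z = 0)
    (rel2 : ∀ x z, ψ x (fun _ => 1) z = 0)
    (rel3 : ∀ x y, ψ x y (fun _ => 1) = 0)
    (hinv : ∀ (σ : Equiv.Perm (Fin (2 * g + 2))) (x y z : Fin (2 * g + 2) → ZMod 2),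
      (∑ i, x i) = 0 → (∑ i, y i) = 0 → (∑ i, z i) = 0 →
      ψ (x ∘ σ) (y ∘ σ) (z ∘ σ) = ψ x y z) :
    ∀ x y z : Fin (2 * g + 2) → ZMod 2,
      (∑ i, x i) = 0 → (∑ i, y i) = 0 → (∑ i, z i) = 0 → ψ x y z = 0 := by
  have hψ : IsInvariantTrilinearForm ψ := ⟨add1, add2, add3, rel1, rel2, rel3, hinv⟩
  intro x y z hx hy hz
  exact hψ.eq_zero_of_apply_fVec
    (fun a b c ha hb hc => hψ.apply_fVec_eq_zero ⟨g + 1, by ring⟩ (by omega) ha hb hc) hx hy hz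
end

section
/- Define x_i = f_{2i-1} + f_{2i} and y_i = f₁ + f₂ + ⋯ + f_{2i-1} in the 𝔽₂-vector space H spanned by f₁,…,f_{2g+1} with relation Σ fᵢ = 0, for i = 1,…,g. Let ψ : H^{⊗3} → 𝔽₂ be the linear map with ψ(f_i⊗f_j⊗f_k) = 1 iff exactly two of i,j,k are equal. Then: (a) ψ(z_i⊗z_j⊗z_k) = 0 whenever i, j, k are pairwise distinct and each z_l ∈ {x_l, y_l}; (b) for 2 ≤ k ≤ g-1 and i < k, ψ(x_i⊗y_i⊗y_k + x_{k+1}⊗y_{k+1}⊗y_k) = 1; (c) for i ≥ k+2, or k = 1, or k = g, or third factor x_k instead of y_k, ψ(x_i⊗y_i⊗z_k + x_{k+1}⊗y_{k+1}⊗z_k) = 0 (indices taken with i ≠ k, i ≠ k+1, subscripts mod g). -/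
/-!
Over `𝔽₂` the indicator of "exactly two of `i, j, k` coincide" is
`[i = j] + [i = k] + [j = k] + [i = j = k]`, so
`ψ(u, v, w) = (u·v) Σw + (u·w) Σv + (v·w) Σu + Σ uvw`.
Since `x_i` is the indicator of `{2i-1, 2i}` and `y_j` that of the initial segment `[1, 2j-1]`,
we have `Σ x_i = 0`, `Σ y_j = 1`, `y_i y_j = y_{min(i,j)}`, `x_i x_j = δ_{ij} x_i` and
`x_i·y_j = δ_{ij}`. Hence `ψ(x_i, y_i, y_k) = [k ≤ i]` and `ψ(x_i, y_i, x_k) = [i = k]`, from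
which (b) and (c) are read off, and (a) follows in the same way.
-/

open Finset

/-- The trilinear form with `ψ(f_i⊗f_j⊗f_k) = 1` iff exactly two of `i, j, k` coincide. -/
def psi {n : ℕ} (x y z : Fin n → ZMod 2) : ZMod 2 :=
  ∑ i, ∑ j, ∑ k, if exactlyTwo i j k then x i * y j * z k else 0

/-- The basis vector `f_m` (for `1 ≤ m ≤ 2g+1`) of the permutation module. -/
def fv (g m : ℕ) : Fin (2 * g + 1) → ZMod 2 :=
  fun a => if (a : ℕ) + 1 = m then 1 else 0

/-- `x_i = f_{2i-1} + f_{2i}`. -/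
def xv (g i : ℕ) : Fin (2 * g + 1) → ZMod 2 := fv g (2 * i - 1) + fv g (2 * i)

/-- `y_i = f₁ + f₂ + ⋯ + f_{2i-1}`. -/
def yv (g i : ℕ) : Fin (2 * g + 1) → ZMod 2 := ∑ m ∈ Finset.Icc 1 (2 * i - 1), fv g m

section Psi

variable {n : ℕ}

theorem mul_dotProduct_eq_dotProduct_mul {m α : Type*} [Fintype m] [Semigroup α]
    [AddCommMonoid α] (x y z : m → α) : (x * y) ⬝ᵥ z = x ⬝ᵥ (y * z) := by
  simp only [dotProduct, Pi.mul_apply, mul_assoc]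

theorem ite_exactlyTwo (i j k : Fin n) (c : ZMod 2) :
    (if exactlyTwo i j k then c else 0) =
      (if i = j then c else 0) + (if i = k then c else 0) + (if j = k then c else 0)
        + (if i = j ∧ j = k then c else 0) := by
  unfold exactlyTwo
  by_cases h₁ : i = j <;> by_cases h₂ : i = k <;> by_cases h₃ : j = k <;>
    simp_all [CharTwo.add_self_eq_zero]

theorem psi_eq (x y z : Fin n → ZMod 2) :
    psi x y z = x ⬝ᵥ y * ∑ a, z a + x ⬝ᵥ z * ∑ a, y a + y ⬝ᵥ z * ∑ a, x a
      + x ⬝ᵥ (y * z) := by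
  simp only [psi, ite_exactlyTwo, sum_add_distrib, ite_and]
  simp only [mul_comm, mul_left_comm, sum_ite_irrel, sum_const_zero, sum_ite_eq, mem_univ,
    ↓reduceIte, dotProduct, mul_sum, Pi.mul_apply, add_left_inj, add_right_inj]
  exact Finset.sum_comm

theorem psi_comm₁₂ (x y z : Fin n → ZMod 2) : psi x y z = psi y x z := by
  rw [psi_eq, psi_eq, dotProduct_comm x y, ← mul_dotProduct_eq_dotProduct_mul,
    ← mul_dotProduct_eq_dotProduct_mul, mul_comm x y]
  ring

theorem psi_comm₂₃ (x y z : Fin n → ZMod 2) : psi x y z = psi x z y := by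
  rw [psi_eq, psi_eq, dotProduct_comm y z, mul_comm y z]
  ring

theorem psi_comm₁₃ (x y z : Fin n → ZMod 2) : psi x y z = psi z y x := by
  rw [psi_comm₁₂, psi_comm₂₃, psi_comm₁₂]

end Psi

section Basis

variable {g i j k : ℕ}

theorem yv_apply (a : Fin (2 * g + 1)) : yv g j a = if (a : ℕ) < 2 * j - 1 then 1 else 0 := by
  simp only [yv, fv, Finset.sum_apply, sum_ite_eq, mem_Icc]
  exact if_congr (by omega) rfl rfl

theorem xv_apply (a : Fin (2 * g + 1)) :
    xv g j a = if (a : ℕ) + 1 = 2 * j - 1 ∨ (a : ℕ) + 1 = 2 * j then 1 else 0 := by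
  simp only [xv, fv, Pi.add_apply]
  split_ifs <;> first | omega | decide

theorem yv_mul_yv (i j : ℕ) : yv g i * yv g j = yv g (min i j) := by
  ext a
  simp only [Pi.mul_apply, yv_apply]
  split_ifs <;> first | omega | decide

theorem xv_mul_xv (i j : ℕ) : xv g i * xv g j = if i = j then xv g i else 0 := by
  split_ifs with h
  · subst h
    ext a
    simp only [Pi.mul_apply, xv_apply]
    split_ifs <;> decide
  · ext a
    simp only [Pi.mul_apply, Pi.zero_apply, xv_apply]
    split_ifs <;> first | omega | decide

theorem fv_eq_single {m : ℕ} (hm : 1 ≤ m) (hmg : m ≤ 2 * g + 1) :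
    fv g m = Pi.single ⟨m - 1, by omega⟩ 1 := by
  ext a
  simp only [fv, Pi.single_apply, Fin.ext_iff]
  exact if_congr (by omega) rfl rfl

theorem xv_dotProduct (hi : 1 ≤ i) (hig : i ≤ g) (w : Fin (2 * g + 1) → ZMod 2) :
    xv g i ⬝ᵥ w = w ⟨2 * i - 2, by omega⟩ + w ⟨2 * i - 1, by omega⟩ := by
  rw [xv, add_dotProduct, fv_eq_single (by omega) (by omega), fv_eq_single (by omega) (by omega),
    single_one_dotProduct, single_one_dotProduct]
  rfl

theorem sum_xv (hi : 1 ≤ i) (hig : i ≤ g) : ∑ a, xv g i a = 0 := by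
  rw [← dotProduct_one, xv_dotProduct hi hig, Pi.one_apply, Pi.one_apply, CharTwo.add_self_eq_zero]

theorem sum_yv (hi : 1 ≤ i) (hig : i ≤ g) : ∑ a, yv g i a = 1 := by
  have sum_fv : ∀ m ∈ Icc 1 (2 * i - 1), fv g m ⬝ᵥ 1 = 1 := fun m hm => by
    rw [mem_Icc] at hm
    rw [fv_eq_single hm.1 (by omega), single_one_dotProduct, Pi.one_apply]
  rw [← dotProduct_one, yv, sum_dotProduct, sum_congr rfl sum_fv, sum_const, Nat.card_Icc,
    nsmul_one, ZMod.natCast_eq_one_iff_odd]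
  exact ⟨i - 1, by omega⟩

theorem yv_dotProduct_yv (hi : 1 ≤ i) (hig : i ≤ g) (hj : 1 ≤ j) (hjg : j ≤ g) :
    yv g i ⬝ᵥ yv g j = 1 := by
  change ∑ a, (yv g i * yv g j) a = 1
  rw [yv_mul_yv, sum_yv (by omega) (by omega)]

theorem xv_dotProduct_yv (hi : 1 ≤ i) (hig : i ≤ g) (j : ℕ) :
    xv g i ⬝ᵥ yv g j = if i = j then 1 else 0 := by
  rw [xv_dotProduct hi hig, yv_apply, yv_apply, Fin.val_mk, Fin.val_mk]
  split_ifs <;> first | omega | decide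

theorem xv_dotProduct_xv (hi : 1 ≤ i) (hig : i ≤ g) (j : ℕ) : xv g i ⬝ᵥ xv g j = 0 := by
  rw [xv_dotProduct hi hig, xv_apply, xv_apply, Fin.val_mk, Fin.val_mk]
  split_ifs <;> first | omega | decide

end Basis

section Values

variable {g i j k : ℕ}

theorem psi_xv_yv_yv (hi : 1 ≤ i) (hig : i ≤ g) (hj : 1 ≤ j) (hjg : j ≤ g) (hk : 1 ≤ k)
    (hkg : k ≤ g) :
    psi (xv g i) (yv g j) (yv g k) =
      (if i = j then 1 else 0) + (if i = k then 1 else 0) + (if i = min j k then 1 else 0) := by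
  rw [psi_eq, yv_mul_yv, xv_dotProduct_yv hi hig, xv_dotProduct_yv hi hig,
    xv_dotProduct_yv hi hig, sum_yv hj hjg, sum_yv hk hkg, sum_xv hi hig]
  ring

theorem psi_xv_xv_yv (hi : 1 ≤ i) (hig : i ≤ g) (hj : 1 ≤ j) (hjg : j ≤ g) :
    psi (xv g i) (xv g j) (yv g k) = if i = j ∧ i = k then 1 else 0 := by
  rw [psi_eq, ← mul_dotProduct_eq_dotProduct_mul, xv_mul_xv, xv_dotProduct_xv hi hig,
    sum_xv hi hig, sum_xv hj hjg]
  by_cases hij : i = j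
  · simp [hij, xv_dotProduct_yv hj hjg]
  · simp [hij]

theorem psi_xv_xv_xv (hi : 1 ≤ i) (hig : i ≤ g) : psi (xv g i) (xv g j) (xv g k) = 0 := by
  rw [psi_eq, ← mul_dotProduct_eq_dotProduct_mul, xv_mul_xv, xv_dotProduct_xv hi hig,
    xv_dotProduct_xv hi hig, sum_xv hi hig]
  split_ifs <;> simp [xv_dotProduct_xv hi hig]

theorem psi_yv_yv_yv (hi : 1 ≤ i) (hig : i ≤ g) (hj : 1 ≤ j) (hjg : j ≤ g) (hk : 1 ≤ k)
    (hkg : k ≤ g) : psi (yv g i) (yv g j) (yv g k) = 0 := by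
  rw [psi_eq, yv_mul_yv, yv_dotProduct_yv hi hig hj hjg, yv_dotProduct_yv hi hig hk hkg,
    yv_dotProduct_yv hj hjg hk hkg, yv_dotProduct_yv hi hig (by omega) (by omega), sum_yv hi hig,
    sum_yv hj hjg, sum_yv hk hkg]
  decide

theorem psi_xv_yv_yv_self (hi : 1 ≤ i) (hig : i ≤ g) (hk : 1 ≤ k) (hkg : k ≤ g) :
    psi (xv g i) (yv g i) (yv g k) = if k ≤ i then 1 else 0 := by
  rw [psi_xv_yv_yv hi hig hi hig hk hkg]
  split_ifs <;> first | omega | decide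

theorem psi_xv_yv_xv_self (hi : 1 ≤ i) (hig : i ≤ g) (hk : 1 ≤ k) (hkg : k ≤ g) :
    psi (xv g i) (yv g i) (xv g k) = if i = k then 1 else 0 := by
  rw [psi_comm₂₃, psi_xv_xv_yv hi hig hk hkg]
  exact if_congr (and_iff_left rfl) rfl rfl

theorem psi_eq_zero_of_pairwise_ne (hi : 1 ≤ i) (hig : i ≤ g) (hj : 1 ≤ j) (hjg : j ≤ g)
    (hk : 1 ≤ k) (hkg : k ≤ g) (hij : i ≠ j) (hjk : j ≠ k) (hik : i ≠ k)
    {zi zj zk : Fin (2 * g + 1) → ZMod 2} (hzi : zi = xv g i ∨ zi = yv g i)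
    (hzj : zj = xv g j ∨ zj = yv g j) (hzk : zk = xv g k ∨ zk = yv g k) :
    psi zi zj zk = 0 := by
  have hmin : ∀ {a b c : ℕ}, a ≠ b → a ≠ c → a ≠ min b c := by omega
  rcases hzi with rfl | rfl <;> rcases hzj with rfl | rfl <;> rcases hzk with rfl | rfl
  · exact psi_xv_xv_xv hi hig
  · rw [psi_xv_xv_yv hi hig hj hjg]
    simp [hij]
  · rw [psi_comm₂₃, psi_xv_xv_yv hi hig hk hkg]
    simp [hik]
  · rw [psi_xv_yv_yv hi hig hj hjg hk hkg]
    simp [hij, hik, hmin hij hik]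
  · rw [psi_comm₁₃, psi_xv_xv_yv hk hkg hj hjg]
    simp [hjk.symm]
  · rw [psi_comm₁₂, psi_xv_yv_yv hj hjg hi hig hk hkg]
    simp [hij.symm, hjk, hmin hij.symm hjk]
  · rw [psi_comm₁₃, psi_xv_yv_yv hk hkg hj hjg hi hig]
    simp [hjk.symm, hik.symm, hmin hjk.symm hik.symm]
  · exact psi_yv_yv_yv hi hig hj hjg hk hkg

end Values

theorem mod_add_one_eq_ite {k g : ℕ} (hkg : k ≤ g) : k % g + 1 = if k = g then 1 else k + 1 := by
  split_ifs with hk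
  · rw [hk, Nat.mod_self]
  · rw [Nat.mod_eq_of_lt (by omega)]

theorem stmt12_general (g : ℕ) :
    (∀ i j k : ℕ, 1 ≤ i → i ≤ g → 1 ≤ j → j ≤ g → 1 ≤ k → k ≤ g →
      i ≠ j → j ≠ k → i ≠ k →
      ∀ zi zj zk : Fin (2 * g + 1) → ZMod 2,
        (zi = xv g i ∨ zi = yv g i) → (zj = xv g j ∨ zj = yv g j) →
        (zk = xv g k ∨ zk = yv g k) → psi zi zj zk = 0) ∧
    (∀ i k : ℕ, 2 ≤ k → k ≤ g - 1 → 1 ≤ i → i < k →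
      psi (xv g i) (yv g i) (yv g k) + psi (xv g (k + 1)) (yv g (k + 1)) (yv g k) = 1) ∧
    (∀ i k : ℕ, 1 ≤ i → i ≤ g → 1 ≤ k → k ≤ g → i ≠ k → i ≠ k % g + 1 →
      ((k + 2 ≤ i ∨ k = 1 ∨ k = g) →
        psi (xv g i) (yv g i) (yv g k)
          + psi (xv g (k % g + 1)) (yv g (k % g + 1)) (yv g k) = 0) ∧
      (psi (xv g i) (yv g i) (xv g k)
          + psi (xv g (k % g + 1)) (yv g (k % g + 1)) (xv g k) = 0)) := by
  refine ⟨fun i j k hi hig hj hjg hk hkg hij hjk hik _ _ _ ↦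
    psi_eq_zero_of_pairwise_ne hi hig hj hjg hk hkg hij hjk hik, ?_, ?_⟩
  · intro i k hk hkg hi hik
    rw [psi_xv_yv_yv_self hi (by omega) (by omega) (by omega),
      psi_xv_yv_yv_self (by omega) (by omega) (by omega) (by omega)]
    simp [show ¬k ≤ i by omega]
  · intro i k hi hig hk hkg hik hik'
    rw [mod_add_one_eq_ite hkg] at hik' ⊢
    have hsucc1 : 1 ≤ (if k = g then 1 else k + 1) := by split_ifs <;> omega
    have hsuccg : (if k = g then 1 else k + 1) ≤ g := by split_ifs <;> omega
    rw [psi_xv_yv_yv_self hi hig hk hkg, psi_xv_yv_yv_self hsucc1 hsuccg hk hkg,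
      psi_xv_yv_xv_self hi hig hk hkg, psi_xv_yv_xv_self hsucc1 hsuccg hk hkg]
    refine ⟨fun hcases ↦ ?_, ?_⟩ <;> split_ifs <;> first | omega | decide

/-- Values of `ψ` on the symplectic basis elements, recovering the harmonic volume of a
hyperelliptic curve: (a) pairwise-distinct indices give `0`; (b) for `2 ≤ k ≤ g-1` and
`i < k`, `ψ(x_i⊗y_i⊗y_k + x_{k+1}⊗y_{k+1}⊗y_k) = 1`; (c) for `i ≥ k+2`, or `k = 1`, or
`k = g`, or third factor `x_k`, the corresponding value is `0` (subscripts mod `g`, with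
`i ≠ k`, `i ≠ k+1`). -/
theorem stmt12 (g : ℕ) (hg : 3 ≤ g) :
    (∀ i j k : ℕ, 1 ≤ i → i ≤ g → 1 ≤ j → j ≤ g → 1 ≤ k → k ≤ g →
      i ≠ j → j ≠ k → i ≠ k →
      ∀ zi zj zk : Fin (2 * g + 1) → ZMod 2,
        (zi = xv g i ∨ zi = yv g i) → (zj = xv g j ∨ zj = yv g j) →
        (zk = xv g k ∨ zk = yv g k) → psi zi zj zk = 0) ∧
    (∀ i k : ℕ, 2 ≤ k → k ≤ g - 1 → 1 ≤ i → i < k →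
      psi (xv g i) (yv g i) (yv g k) + psi (xv g (k + 1)) (yv g (k + 1)) (yv g k) = 1) ∧
    (∀ i k : ℕ, 1 ≤ i → i ≤ g → 1 ≤ k → k ≤ g → i ≠ k → i ≠ k % g + 1 →
      ((k + 2 ≤ i ∨ k = 1 ∨ k = g) →
        psi (xv g i) (yv g i) (yv g k)
          + psi (xv g (k % g + 1)) (yv g (k % g + 1)) (yv g k) = 0) ∧
      (psi (xv g i) (yv g i) (xv g k)
          + psi (xv g (k % g + 1)) (yv g (k % g + 1)) (xv g k) = 0)) :=
  stmt12_general g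
end

section
/- Let B(u,v) = ∫₀¹ x^{u-1}(1-x)^{v-1} dx be the Beta function, g ≥ 1, ζ = e^{2πi/(2g+2)}, and define the path e_j on the curve w² = z^{2g+2} - 1 by e_j(t) = (2tζ^j, √-1·√(1-(2t)^{2g+2})) for 0 ≤ t ≤ 1/2 and e_j(t) = ((2-2t)ζ^j, -√-1·√(1-(2-2t)^{2g+2})) for 1/2 ≤ t ≤ 1. Then for ω_i = z^{i-1}dz/w and 1 ≤ i ≤ g, 0 ≤ j ≤ 2g+1, the line integral satisfies ∫_{e_j} ω_i = -2√-1 · ζ^{ij} · B(i/(2g+2), 1/2)/(2g+2). Concretely, 2 ∫₀¹ (sζ^j)^{i-1} ζ^j ds / (√-1·√(1-s^{2g+2})) = -2√-1·ζ^{ij}·B(i/(2g+2), 1/2)/(2g+2). -/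
open intervalIntegral

open MeasureTheory Set in
lemma key_real (g i : ℕ) (hg : 1 ≤ g) (hi1 : 1 ≤ i) (hig : i ≤ g) :
    (∫ x in (0:ℝ)..1,
        x ^ ((i : ℝ) / (2 * g + 2) - 1) * (1 - x) ^ ((1 / 2 : ℝ) - 1)) =
      (2 * g + 2) * ∫ s in (0:ℝ)..1, s ^ (i - 1) / Real.sqrt (1 - s ^ (2 * g + 2)) := by
  set n : ℕ := 2 * g + 2 with hn
  have hn2 : 2 ≤ n := by omega
  have hn0 : (n : ℝ) ≠ 0 := by positivity
  have hnR : ((n : ℕ) : ℝ) = 2 * (g : ℝ) + 2 := by push_cast [hn]; ring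
  have himg : (fun x : ℝ => x ^ n) '' Ioo 0 1 = Ioo (0:ℝ) 1 := by
    ext y
    constructor
    · rintro ⟨x, ⟨hx0, hx1⟩, rfl⟩
      exact ⟨pow_pos hx0 n, pow_lt_one₀ hx0.le hx1 (by omega)⟩
    · rintro ⟨hy0, hy1⟩
      refine ⟨y ^ ((n : ℝ)⁻¹), ⟨Real.rpow_pos_of_pos hy0 _,
        Real.rpow_lt_one hy0.le hy1 (by positivity)⟩, ?_⟩
      show (y ^ ((n:ℝ)⁻¹)) ^ n = y
      rw [← Real.rpow_natCast (y ^ ((n:ℝ)⁻¹)) n, ← Real.rpow_mul hy0.le,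
        inv_mul_cancel₀ hn0, Real.rpow_one]
  have hderiv : ∀ x ∈ Ioo (0:ℝ) 1,
      HasDerivWithinAt (fun x : ℝ => x ^ n) ((n : ℝ) * x ^ (n - 1)) (Ioo 0 1) x :=
    fun x _ => (hasDerivAt_pow n x).hasDerivWithinAt
  have hinj : InjOn (fun x : ℝ => x ^ n) (Ioo 0 1) :=
    (pow_left_strictMonoOn₀ (by omega : n ≠ 0)).injOn.mono
      (fun x hx => le_of_lt hx.1)
  have hchg := integral_image_eq_integral_abs_deriv_smul measurableSet_Ioo hderiv hinj
    (fun x : ℝ => x ^ ((i : ℝ) / (2 * g + 2) - 1) * (1 - x) ^ ((1 / 2 : ℝ) - 1))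
  rw [himg] at hchg
  rw [intervalIntegral.integral_of_le (by norm_num : (0:ℝ) ≤ 1),
    intervalIntegral.integral_of_le (by norm_num : (0:ℝ) ≤ 1),
    MeasureTheory.integral_Ioc_eq_integral_Ioo, MeasureTheory.integral_Ioc_eq_integral_Ioo,
    hchg, ← MeasureTheory.integral_const_mul]
  refine MeasureTheory.setIntegral_congr_fun measurableSet_Ioo (fun x hx => ?_)
  obtain ⟨hx0, hx1⟩ := hx
  have hxn1 : x ^ n ≤ 1 := pow_le_one₀ hx0.le hx1.le
  have h1 : |(n : ℝ) * x ^ (n - 1)| = (n : ℝ) * x ^ (n - 1) := by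
    rw [abs_of_nonneg]; positivity
  have h2 : (x ^ n : ℝ) ^ ((i : ℝ) / (2 * g + 2) - 1) = x ^ ((i : ℝ) - n) := by
    rw [← Real.rpow_natCast x n, ← Real.rpow_mul hx0.le]
    congr 1
    rw [hnR]
    field_simp
  have h3 : (1 - x ^ n : ℝ) ^ ((1 / 2 : ℝ) - 1) = (Real.sqrt (1 - x ^ n))⁻¹ := by
    have : ((1:ℝ)/2 - 1) = -(1/2) := by norm_num
    rw [this, Real.rpow_neg (by linarith), ← Real.sqrt_eq_rpow]
  have h4 : x ^ (n - 1) * x ^ ((i : ℝ) - n) = x ^ (i - 1) := by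
    rw [← Real.rpow_natCast x (n - 1), ← Real.rpow_natCast x (i - 1),
      ← Real.rpow_add hx0]
    congr 1
    have : ((n - 1 : ℕ) : ℝ) = (n : ℝ) - 1 := by
      have : 1 ≤ n := by omega
      push_cast [this]; ring
    rw [this]
    have : ((i - 1 : ℕ) : ℝ) = (i : ℝ) - 1 := by push_cast [hi1]; ring
    rw [this]; ring
  simp only [smul_eq_mul, h1, Real.rpow_natCast] at *
  rw [h2, h3]
  rw [div_eq_mul_inv]
  calc (n : ℝ) * x ^ (n - 1) * (x ^ ((i:ℝ) - n) * (Real.sqrt (1 - x ^ n))⁻¹)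
      = (n : ℝ) * (x ^ (n-1) * x ^ ((i:ℝ) - n)) * (Real.sqrt (1 - x ^ n))⁻¹ := by ring
    _ = (2 * g + 2 : ℝ) * (x ^ (i - 1) * (Real.sqrt (1 - x ^ n))⁻¹) := by
        rw [h4, hnR]; ring

/-- The period `∫_{e_j} ω_i` of `ω_i = z^{i-1}dz/w` along the path `e_j` on the curve
`w² = z^{2g+2} - 1`: pulled back along the explicit parametrization, it equals
`-2√-1·ζ^{ij}·B(i/(2g+2), 1/2)/(2g+2)`, where `B` is the Beta function
`B(u,v) = ∫₀¹ x^{u-1}(1-x)^{v-1} dx`. -/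
theorem stmt13 (g i j : ℕ) (hg : 1 ≤ g) (hi1 : 1 ≤ i) (hig : i ≤ g) (hj : j ≤ 2 * g + 1)
    (ζ : ℂ) (hζ : ζ = Complex.exp (2 * Real.pi * Complex.I / (2 * g + 2)))
    (B : ℝ) (hB : B = ∫ x in (0:ℝ)..1,
      x ^ ((i : ℝ) / (2 * g + 2) - 1) * (1 - x) ^ ((1 / 2 : ℝ) - 1)) :
    2 * ∫ s in (0:ℝ)..1, ((s : ℂ) * ζ ^ j) ^ (i - 1) * ζ ^ j
        / (Complex.I * (Real.sqrt (1 - s ^ (2 * g + 2)) : ℂ)) =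
      -2 * Complex.I * ζ ^ (i * j) * (B : ℂ) / (2 * g + 2) := by
  have hBval : B = (2 * g + 2 : ℝ) *
      ∫ s in (0:ℝ)..1, s ^ (i - 1) / Real.sqrt (1 - s ^ (2 * g + 2)) := by
    rw [hB, key_real g i hg hi1 hig]
  set R : ℝ := ∫ s in (0:ℝ)..1, s ^ (i - 1) / Real.sqrt (1 - s ^ (2 * g + 2)) with hR
  have hint : ∀ s : ℝ, ((s : ℂ) * ζ ^ j) ^ (i - 1) * ζ ^ j
        / (Complex.I * (Real.sqrt (1 - s ^ (2 * g + 2)) : ℂ)) =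
      (-Complex.I * ζ ^ (i * j)) *
        ((s ^ (i - 1) / Real.sqrt (1 - s ^ (2 * g + 2)) : ℝ) : ℂ) := by
    intro s
    have hIc : (Complex.I * (Real.sqrt (1 - s ^ (2 * g + 2)) : ℂ))⁻¹ =
        -Complex.I * ((Real.sqrt (1 - s ^ (2 * g + 2)) : ℂ))⁻¹ := by
      rw [mul_inv, Complex.inv_I]
    have hpow : (ζ ^ j) ^ (i - 1) * ζ ^ j = ζ ^ (i * j) := by
      rw [← pow_mul, ← pow_add]
      congr 1
      conv_rhs => rw [show i = (i - 1) + 1 from by omega]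
      ring
    rw [div_eq_mul_inv, hIc, mul_pow, Complex.ofReal_div, Complex.ofReal_pow]
    rw [show ((s:ℂ))^(i-1) * (ζ^j)^(i-1) * ζ^j = ((ζ^j)^(i-1) * ζ^j) * (s:ℂ)^(i-1) by ring,
      hpow]
    rw [div_eq_mul_inv]
    ring
  simp only [hint]
  rw [intervalIntegral.integral_const_mul, intervalIntegral.integral_ofReal, ← hR]
  rw [hBval]
  have h2g : (2 * (g : ℂ) + 2) ≠ 0 := by
    have : (0:ℝ) < 2 * (g:ℝ) + 2 := by positivity
    intro h
    have := congrArg Complex.re h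
    simp at this
    linarith
  push_cast
  field_simp
end

section
/- Let g ≥ 1, ζ = e^{2πi/(2g+2)}, and let Ω_a be the g×g complex matrix with (i,j)-entry ζ^{i(2j-1)}(1-ζ^i). Then Ω_a is invertible, and the (i,j)-entry of its inverse is (1/(g+1)) · ζ^j(−1+ζ^{−2ij})/(1−ζ^j). -/
private lemma geo_sum {g : ℕ} {t : ℂ} (ht : t ^ (g + 1) = 1) (ht1 : t ≠ 1) :
    ∑ j ∈ Finset.range g, t ^ j = -t ^ g := by
  rw [geom_sum_eq ht1, div_eq_iff (sub_ne_zero.mpr ht1)]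
  linear_combination ht

private lemma zpow_reduce {n : ℕ} {ζ : ℂ} (hζ0 : ζ ≠ 0) (h1 : ζ ^ n = 1)
    {a b t : ℤ} (h : a = b + n * t) : ζ ^ a = ζ ^ b := by
  have hn : ζ ^ ((n : ℤ)) = 1 := by rw [zpow_natCast, h1]
  rw [h, zpow_add₀ hζ0, zpow_mul, hn, one_zpow, mul_one]

private lemma key_sum (g m k : ℕ) (ζ : ℂ) (hprim : IsPrimitiveRoot ζ (2 * g + 2))
    (hm1 : 1 ≤ m) (hmg : m ≤ g) (hk1 : 1 ≤ k) (hkg : k ≤ g) :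
    ∑ j ∈ Finset.range g, ζ ^ (m * (2 * (j + 1) - 1)) * (-1 + ζ ^ (-(2 * ((j : ℤ) + 1) * k))) =
      (if m = k then (g : ℂ) + 1 else 0) * ζ ^ (-(m : ℤ)) := by
  have hζ0 : ζ ≠ 0 := hprim.ne_zero (by omega)
  have hroot : ζ ^ (2 * g + 2) = 1 := hprim.pow_eq_one
  have mulpow : ∀ (a : ℤ) (j : ℕ), (ζ ^ a) ^ j = ζ ^ (a * j) := by
    intro a j
    rw [← zpow_natCast (ζ ^ a) j, ← zpow_mul]
  have hterm : ∀ j ∈ Finset.range g,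
      ζ ^ (m * (2 * (j + 1) - 1)) * (-1 + ζ ^ (-(2 * ((j : ℤ) + 1) * k))) =
      -(ζ ^ (m : ℤ) * (ζ ^ (2 * (m : ℤ))) ^ j) +
        ζ ^ ((m : ℤ) - 2 * k) * (ζ ^ (2 * ((m : ℤ) - k))) ^ j := by
    intro j _
    rw [mulpow, mulpow, ← zpow_add₀ hζ0, ← zpow_add₀ hζ0]
    have hnat : ζ ^ (m * (2 * (j + 1) - 1)) = ζ ^ ((m : ℤ) + 2 * m * j) := by
      rw [← zpow_natCast]
      congr 1
      push_cast [show 2 * (j + 1) - 1 = 2 * j + 1 from by omega]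
      ring
    rw [hnat, mul_add, mul_neg_one, ← zpow_add₀ hζ0]
    congr 2 <;> ring
  rw [Finset.sum_congr rfl hterm, Finset.sum_add_distrib, Finset.sum_neg_distrib,
      ← Finset.mul_sum, ← Finset.mul_sum]
  have hr1pow : (ζ ^ (2 * (m : ℤ))) ^ (g + 1) = 1 := by
    rw [mulpow, zpow_reduce hζ0 hroot (t := m) (b := 0) (by push_cast; ring), zpow_zero]
  have hr1ne : ζ ^ (2 * (m : ℤ)) ≠ 1 := by
    intro h
    have hd := (hprim.zpow_eq_one_iff_dvd _).mp h
    have := Int.le_of_dvd (by positivity) hd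
    omega
  rw [geo_sum hr1pow hr1ne]
  by_cases hmk : m = k
  · subst hmk
    simp only [sub_self, mul_zero, zpow_zero, one_pow, if_pos rfl, if_true]
    rw [Finset.sum_const, Finset.card_range, nsmul_eq_mul, mul_one]
    have e1 : ζ ^ (m : ℤ) * (ζ ^ (2 * (m : ℤ))) ^ g = ζ ^ (-(m : ℤ)) := by
      rw [mulpow, ← zpow_add₀ hζ0]
      exact zpow_reduce hζ0 hroot (t := m) (by push_cast; ring)
    rw [mul_neg, neg_neg, e1, show ((m : ℤ) - 2 * m) = -(m : ℤ) from by ring]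
    ring
  · have hr2pow : (ζ ^ (2 * ((m : ℤ) - k))) ^ (g + 1) = 1 := by
      rw [mulpow, zpow_reduce hζ0 hroot (t := (m : ℤ) - k) (b := 0) (by push_cast; ring),
          zpow_zero]
    have hr2ne : ζ ^ (2 * ((m : ℤ) - k)) ≠ 1 := by
      intro h
      have hd := (hprim.zpow_eq_one_iff_dvd _).mp h
      have habs : ((2 * g + 2 : ℕ) : ℤ) ∣ |2 * ((m : ℤ) - k)| := (dvd_abs _ _).mpr hd
      have h0 : (2 : ℤ) * ((m : ℤ) - k) ≠ 0 := by
        intro hz; apply hmk; omega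
      have := Int.le_of_dvd (abs_pos.mpr h0) habs
      rcases abs_cases (2 * ((m : ℤ) - k)) with ⟨he, _⟩ | ⟨he, _⟩ <;> omega
    rw [geo_sum hr2pow hr2ne, if_neg hmk]
    have e1 : ζ ^ (m : ℤ) * (ζ ^ (2 * (m : ℤ))) ^ g = ζ ^ (-(m : ℤ)) := by
      rw [mulpow, ← zpow_add₀ hζ0]
      exact zpow_reduce hζ0 hroot (t := m) (by push_cast; ring)
    have e2 : ζ ^ ((m : ℤ) - 2 * k) * (ζ ^ (2 * ((m : ℤ) - k))) ^ g = ζ ^ (-(m : ℤ)) := by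
      rw [mulpow, ← zpow_add₀ hζ0]
      exact zpow_reduce hζ0 hroot (t := (m : ℤ) - k) (by push_cast; ring)
    simp only [mul_neg, neg_neg]
    rw [e1, e2]
    ring

/-- The matrix `Ω_a` of a-periods, `(Ω_a)_{ij} = ζ^{i(2j-1)}(1-ζ^i)` (indices `1..g`),
is invertible with `(Ω_a⁻¹)_{ij} = (1/(g+1))·ζ^j(-1+ζ^{-2ij})/(1-ζ^j)`. -/
theorem stmt15 (g : ℕ) (hg : 1 ≤ g)
    (ζ : ℂ) (hζ : ζ = Complex.exp (2 * Real.pi * Complex.I / (2 * g + 2)))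
    (A : Matrix (Fin g) (Fin g) ℂ)
    (hA : ∀ i j : Fin g, A i j =
      ζ ^ (((i : ℕ) + 1) * (2 * ((j : ℕ) + 1) - 1)) * (1 - ζ ^ ((i : ℕ) + 1))) :
    IsUnit A.det ∧ ∀ i j : Fin g, A⁻¹ i j =
      (1 / ((g : ℂ) + 1)) * ζ ^ ((j : ℕ) + 1)
        * (-1 + ζ ^ (-(2 * ((i : ℤ) + 1) * ((j : ℤ) + 1)))) / (1 - ζ ^ ((j : ℕ) + 1)) := by
  have hprim : IsPrimitiveRoot ζ (2 * g + 2) := by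
    rw [hζ]
    have h := Complex.isPrimitiveRoot_exp (2 * g + 2) (by omega)
    convert h using 3
    push_cast
    ring
  have hζ0 : ζ ≠ 0 := hprim.ne_zero (by omega)
  have hgC : ((g : ℂ) + 1) ≠ 0 := by
    intro h
    have : ((g : ℝ) + 1) = 0 := by exact_mod_cast congrArg Complex.re h
    have : (0 : ℝ) ≤ (g : ℝ) := Nat.cast_nonneg g
    linarith
  have hone : ∀ l : ℕ, 1 ≤ l → l ≤ g → (1 : ℂ) - ζ ^ l ≠ 0 := by
    intro l h1 h2 h
    exact hprim.pow_ne_one_of_pos_of_lt (show l ≠ 0 by omega) (show l < 2 * g + 2 by omega)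
      (sub_eq_zero.mp h).symm
  set B : Matrix (Fin g) (Fin g) ℂ := fun i j =>
    (1 / ((g : ℂ) + 1)) * ζ ^ ((j : ℕ) + 1)
      * (-1 + ζ ^ (-(2 * ((i : ℤ) + 1) * ((j : ℤ) + 1)))) / (1 - ζ ^ ((j : ℕ) + 1)) with hB
  have hAB : A * B = 1 := by
    ext i k
    rw [Matrix.mul_apply]
    have hterm : ∀ j : Fin g, A i j * B j k =
        ((1 - ζ ^ ((i : ℕ) + 1)) * (1 / ((g : ℂ) + 1)) * ζ ^ ((k : ℕ) + 1)
          / (1 - ζ ^ ((k : ℕ) + 1))) *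
        (ζ ^ (((i : ℕ) + 1) * (2 * ((j : ℕ) + 1) - 1)) *
          (-1 + ζ ^ (-(2 * ((j : ℤ) + 1) * (((k : ℕ) + 1 : ℕ) : ℤ))))) := by
      intro j
      rw [hA, hB]
      have : ((((k : ℕ) + 1 : ℕ)) : ℤ) = (k : ℤ) + 1 := by push_cast; ring
      rw [this]
      ring
    rw [Finset.sum_congr rfl (fun j _ => hterm j), ← Finset.mul_sum]
    rw [Fin.sum_univ_eq_sum_range (fun j => ζ ^ (((i : ℕ) + 1) * (2 * (j + 1) - 1)) *
          (-1 + ζ ^ (-(2 * ((j : ℤ) + 1) * (((k : ℕ) + 1 : ℕ) : ℤ)))))]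
    rw [key_sum g ((i : ℕ) + 1) ((k : ℕ) + 1) ζ hprim (by omega) (by omega) (by omega) (by omega)]
    rw [Matrix.one_apply]
    by_cases hik : i = k
    · subst hik
      rw [if_pos rfl, if_pos rfl]
      have hz : ζ ^ (-(((i : ℕ) + 1 : ℕ) : ℤ)) = (ζ ^ ((i : ℕ) + 1))⁻¹ := by
        rw [zpow_neg, zpow_natCast]
      rw [hz]
      have h1 : (1 : ℂ) - ζ ^ ((i : ℕ) + 1) ≠ 0 := hone _ (by omega) (by omega)
      have h2 : ζ ^ ((i : ℕ) + 1) ≠ 0 := pow_ne_zero _ hζ0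
      field_simp
    · rw [if_neg hik, if_neg (by simpa [Fin.ext_iff] using fun h => hik (by omega))]
      ring
  exact ⟨Matrix.isUnit_det_of_right_inverse hAB,
    fun i j => by rw [Matrix.inv_eq_right_inv hAB]⟩
end

section
/- Let g ≥ 1, ζ = e^{2πi/(2g+2)}, and let Ω_b be the g×g complex matrix with (i,j)-entry (ζ^{2ij}−1)/(ζ^i+1). Then Ω_b is invertible, and the (i,j)-entry of its inverse is (1/(g+1)) · ζ^{−2ij}(1+ζ^j). -/
private lemma sumpow (u : ℂ) (n : ℕ) (hn : u ^ (n + 1) = 1) :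
    ∑ j ∈ Finset.range n, u ^ (j + 1) = if u = 1 then (n : ℂ) else -1 := by
  by_cases hu : u = 1
  · simp [hu]
  · simp only [hu, if_false]
    have h0 : ∑ j ∈ Finset.range (n + 1), u ^ j = 0 := by
      rw [geom_sum_eq hu, hn]; simp
    rw [Finset.sum_range_succ'] at h0
    linear_combination h0

/-- The matrix `Ω_b` of b-periods, `(Ω_b)_{ij} = (ζ^{2ij}-1)/(ζ^i+1)` (indices `1..g`),
is invertible with `(Ω_b⁻¹)_{ij} = (1/(g+1))·ζ^{-2ij}(1+ζ^j)`. -/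
theorem stmt16 (g : ℕ) (hg : 1 ≤ g)
    (ζ : ℂ) (hζ : ζ = Complex.exp (2 * Real.pi * Complex.I / (2 * g + 2)))
    (B : Matrix (Fin g) (Fin g) ℂ)
    (hB : ∀ i j : Fin g, B i j =
      (ζ ^ (2 * ((i : ℕ) + 1) * ((j : ℕ) + 1)) - 1) / (ζ ^ ((i : ℕ) + 1) + 1)) :
    IsUnit B.det ∧ ∀ i j : Fin g, B⁻¹ i j =
      (1 / ((g : ℂ) + 1)) * ζ ^ (-(2 * ((i : ℤ) + 1) * ((j : ℤ) + 1)))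
        * (1 + ζ ^ ((j : ℕ) + 1)) := by
  -- basic facts about ζ
  have hprim : IsPrimitiveRoot ζ (2 * g + 2) := by
    have h0 : (2 * g + 2 : ℕ) ≠ 0 := by omega
    have := Complex.isPrimitiveRoot_exp (2 * g + 2) h0
    convert this using 2
    · rw [hζ]; congr 1; push_cast; ring
  have hζ0 : ζ ≠ 0 := by
    rw [hζ]; exact Complex.exp_ne_zero _
  have hne : ((g : ℂ) + 1) ≠ 0 := by
    intro h
    have h' : ((g + 1 : ℕ) : ℂ) = 0 := by push_cast; linear_combination h
    exact Nat.cast_ne_zero.mpr (by omega) h'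
  have hz1 : ζ ^ ((2 * g + 2 : ℕ) : ℤ) = 1 := by
    rw [zpow_natCast]; exact hprim.pow_eq_one
  -- denominators never vanish
  have hden : ∀ i : Fin g, ζ ^ ((i : ℕ) + 1) + 1 ≠ 0 := by
    intro i h
    have hneg : ζ ^ ((i : ℕ) + 1) = -1 := by linear_combination h
    have hpow : ζ ^ (2 * ((i : ℕ) + 1)) = 1 := by
      rw [mul_comm, pow_mul, hneg]; ring
    have hdvd : (2 * g + 2) ∣ 2 * ((i : ℕ) + 1) := hprim.dvd_of_pow_eq_one _ hpow
    have := Nat.le_of_dvd (by omega) hdvd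
    omega
  -- the candidate inverse
  set C : Matrix (Fin g) (Fin g) ℂ := fun i j =>
    (1 / ((g : ℂ) + 1)) * ζ ^ (-(2 * ((i : ℤ) + 1) * ((j : ℤ) + 1)))
      * (1 + ζ ^ ((j : ℕ) + 1)) with hC
  -- key: B * C = 1
  have hBC : B * C = 1 := by
    ext i k
    rw [Matrix.mul_apply, Matrix.one_apply]
    set a : ℤ := (i : ℤ) + 1 with ha
    set b : ℤ := (k : ℤ) + 1 with hb
    set x : ℂ := ζ ^ (2 * (a - b)) with hx
    set y : ℂ := ζ ^ (-(2 * b)) with hy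
    set c : ℂ := (1 + ζ ^ ((k : ℕ) + 1)) / (ζ ^ ((i : ℕ) + 1) + 1) * (1 / ((g : ℂ) + 1)) with hc
    have hterm : ∀ j : Fin g, B i j * C j k = c * (x ^ ((j : ℕ) + 1) - y ^ ((j : ℕ) + 1)) := by
      intro j
      rw [hB, hC]
      have e1 : ζ ^ (2 * ((i : ℕ) + 1) * ((j : ℕ) + 1)) *
          ζ ^ (-(2 * ((j : ℤ) + 1) * ((k : ℤ) + 1))) = x ^ ((j : ℕ) + 1) := by
        rw [hx, ← zpow_natCast ζ (2 * ((i : ℕ) + 1) * ((j : ℕ) + 1)),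
          ← zpow_add₀ hζ0, ← zpow_natCast (ζ ^ (2 * (a - b))) ((j : ℕ) + 1), ← zpow_mul]
        congr 1
        push_cast [ha, hb]; ring
      have e2 : ζ ^ (-(2 * ((j : ℤ) + 1) * ((k : ℤ) + 1))) = y ^ ((j : ℕ) + 1) := by
        rw [hy, ← zpow_natCast (ζ ^ (-(2 * b))) ((j : ℕ) + 1), ← zpow_mul]
        congr 1
        push_cast [hb]; ring
      have expand : (ζ ^ (2 * ((i : ℕ) + 1) * ((j : ℕ) + 1)) - 1) *
          ζ ^ (-(2 * ((j : ℤ) + 1) * ((k : ℤ) + 1))) =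
          x ^ ((j : ℕ) + 1) - y ^ ((j : ℕ) + 1) := by
        rw [sub_mul, e1, e2, one_mul]
      rw [hc, ← expand]
      ring
    rw [Finset.sum_congr rfl (fun j _ => hterm j), ← Finset.mul_sum]
    have hsum : ∑ j : Fin g, (x ^ ((j : ℕ) + 1) - y ^ ((j : ℕ) + 1)) =
        ∑ j ∈ Finset.range g, (x ^ (j + 1) - y ^ (j + 1)) :=
      Fin.sum_univ_eq_sum_range (fun j => x ^ (j + 1) - y ^ (j + 1)) g
    rw [hsum, Finset.sum_sub_distrib]
    have hx1 : x ^ (g + 1) = 1 := by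
      rw [hx, ← zpow_natCast (ζ ^ (2 * (a - b))) (g + 1), ← zpow_mul]
      have : 2 * (a - b) * ((g + 1 : ℕ) : ℤ) = ((2 * g + 2 : ℕ) : ℤ) * (a - b) := by
        push_cast; ring
      rw [this, zpow_mul, hz1, one_zpow]
    have hy1 : y ^ (g + 1) = 1 := by
      rw [hy, ← zpow_natCast (ζ ^ (-(2 * b))) (g + 1), ← zpow_mul]
      have : -(2 * b) * ((g + 1 : ℕ) : ℤ) = ((2 * g + 2 : ℕ) : ℤ) * (-b) := by
        push_cast; ring
      rw [this, zpow_mul, hz1, one_zpow]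
    have hyne : y ≠ 1 := by
      intro h
      have : ζ ^ (2 * b) = 1 := by
        calc ζ ^ (2 * b) = ζ ^ (2 * b) * y := by rw [h, mul_one]
          _ = ζ ^ (2 * b + -(2 * b)) := by rw [hy, zpow_add₀ hζ0]
          _ = 1 := by simp
      have hdvd : ((2 * g + 2 : ℕ) : ℤ) ∣ 2 * b := (hprim.zpow_eq_one_iff_dvd _).mp this
      have := Int.le_of_dvd (by rw [hb]; positivity) hdvd
      rw [hb] at this
      push_cast at this
      have hk := k.isLt
      omega
    rw [sumpow x g hx1, sumpow y g hy1, if_neg hyne]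
    have hxiff : x = 1 ↔ i = k := by
      rw [hx, hprim.zpow_eq_one_iff_dvd]
      constructor
      · intro hdvd
        have h2 : ((g + 1 : ℕ) : ℤ) ∣ (a - b) := by
          rcases hdvd with ⟨m, hm⟩
          refine ⟨m, ?_⟩
          have : (2 : ℤ) * (a - b) = 2 * (((g + 1 : ℕ) : ℤ) * m) := by
            push_cast at hm ⊢; linarith
          linarith
        have h0 : a - b = 0 := by
          refine Int.eq_zero_of_abs_lt_dvd h2 ?_
          have hi := i.isLt
          have hk := k.isLt
          rw [ha, hb]
          rw [abs_lt]
          constructor <;> [push_cast; push_cast] <;> omega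
        have : (i : ℤ) = (k : ℤ) := by rw [ha, hb] at h0; omega
        exact Fin.ext (by exact_mod_cast this)
      · intro h; subst h
        simp [ha, ← hb]
    by_cases hik : i = k
    · rw [if_pos hik, if_pos (hxiff.mpr hik), hc]
      subst hik
      field_simp [hden i]
      ring
    · rw [if_neg hik, if_neg (fun h => hik (hxiff.mp h))]
      ring
  refine ⟨Matrix.isUnit_det_of_right_inverse hBC, ?_⟩
  intro i j
  rw [Matrix.inv_eq_right_inv hBC, hC]
end

section
/- Let g ≥ 1, ζ = e^{2πi/(2g+2)}, and for 1 ≤ i,j ≤ g set A_{ij} = ζ^{i(2j-1)}(1-ζ^i) and B_{ij} = (ζ^{2ij}-1)/(ζ^i+1). Then the (i,j)-entry of A⁻¹B equals (1/(g+1)) Σ_{k=1}^{g} ζ^k(ζ^{-2ik}-1)(ζ^{2kj}-1)/(1-ζ^{2k}). -/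
/-!
Put `ω = ζ ^ 2`, a primitive `(g + 1)`-th root of unity. Then `A = D V` and
`B = D' (V - 𝟙)`, where `V = (ω ^ (i j))` with `1 ≤ i, j ≤ g` is the discrete Fourier
matrix of `ω` with its `0`-th row and column deleted, `𝟙` is the all-ones matrix,
`D = diag ((1 - ζ ^ i) ζ ^ (-i))` and `D' = diag (1 / (ζ ^ i + 1))`. Since
`∑_{l=1}^{g} x ^ l = -1` for every `(g + 1)`-th root of unity `x ≠ 1`, the inverse of `V` is
`((ω ^ (-i j) - 1) / (g + 1))`. Finally `D⁻¹ D' = diag (ζ ^ k / (1 - ζ ^ (2 k)))`, and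
`A⁻¹ B = V⁻¹ (D⁻¹ D') (V - 𝟙)` is the stated sum.
-/

open Finset

section

open Matrix

variable {K : Type*} [Field K] {g : ℕ}

theorem sum_range_pow_succ_eq_neg_one {x : K} (hx : x ^ (g + 1) = 1) (hx1 : x ≠ 1) :
    ∑ l ∈ range g, x ^ (l + 1) = -1 := by
  have hgeom : ∑ l ∈ range (g + 1), x ^ l = 0 := by
    rw [geom_sum_eq hx1, hx, sub_self, zero_div]
  rw [sum_range_succ', pow_zero] at hgeom
  linear_combination hgeom

theorem sum_fin_eq_sum_Icc_one {M : Type*} [AddCommMonoid M] (f : ℕ → M) :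
    ∑ i : Fin g, f ((i : ℕ) + 1) = ∑ i ∈ Icc 1 g, f i := by
  rw [Fin.sum_univ_eq_sum_range (fun i => f (i + 1)), range_eq_Ico, sum_Ico_add', zero_add,
    Ico_add_one_right_eq_Icc]

def dftMinor (ω : K) (g : ℕ) : Matrix (Fin g) (Fin g) K :=
  of fun i j => ω ^ (((i : ℕ) + 1) * ((j : ℕ) + 1))

def dftMinorInv (ω : K) (g : ℕ) : Matrix (Fin g) (Fin g) K :=
  of fun i j => (ω⁻¹ ^ (((i : ℕ) + 1) * ((j : ℕ) + 1)) - 1) / ((g : K) + 1)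

theorem dftMinor_mul_dftMinorInv {ω : K} (hω : IsPrimitiveRoot ω (g + 1)) :
    dftMinor ω g * dftMinorInv ω g = 1 := by
  ext i k
  have hω0 : ω ≠ 0 := hω.ne_zero (by omega)
  set y := ω ^ ((i : ℕ) + 1)
  set z := ω⁻¹ ^ ((k : ℕ) + 1)
  have hterm : ∀ l : Fin g, dftMinor ω g i l * dftMinorInv ω g l k =
      ((y * z) ^ ((l : ℕ) + 1) - y ^ ((l : ℕ) + 1)) / ((g : K) + 1) := by
    intro l
    simp only [dftMinor, dftMinorInv, of_apply, y, z]
    ring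
  have hy : y ^ (g + 1) = 1 := by rw [pow_right_comm, hω.pow_eq_one, one_pow]
  have hz : z ^ (g + 1) = 1 := by rw [pow_right_comm, inv_pow, hω.pow_eq_one, inv_one, one_pow]
  have hy1 : y ≠ 1 := hω.pow_ne_one_of_pos_of_lt (by omega) (by omega)
  have hn : (g : K) + 1 ≠ 0 := by exact_mod_cast hω.neZero'.out
  rw [mul_apply, sum_congr rfl fun l _ => hterm l, ← sum_div, sum_sub_distrib,
    Fin.sum_univ_eq_sum_range (fun l => (y * z) ^ (l + 1)),
    Fin.sum_univ_eq_sum_range (fun l => y ^ (l + 1)), sum_range_pow_succ_eq_neg_one hy hy1,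
    one_apply]
  by_cases hik : i = k
  · have hyz : y * z = 1 := by
      simp only [y, z]
      rw [hik, inv_pow, mul_inv_cancel₀ (pow_ne_zero _ hω0)]
    simp only [hyz, one_pow, sum_const, card_range, nsmul_eq_mul, mul_one, if_pos hik,
      sub_neg_eq_add, div_self hn]
  · have hyz : y * z ≠ 1 := by
      simp only [y, z]
      rw [inv_pow, Ne, mul_inv_eq_one₀ (pow_ne_zero _ hω0)]
      exact fun h => hik (Fin.ext (by simpa using hω.pow_inj (by omega) (by omega) h))
    rw [sum_range_pow_succ_eq_neg_one (by rw [mul_pow, hy, hz, one_mul]) hyz, if_neg hik,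
      sub_self, zero_div]

-- `Ω_a` and `Ω_b`, indexed from `0`: entry `(i, j)` is the paper's entry `(i + 1, j + 1)`.
def periodsA (ζ : K) (g : ℕ) : Matrix (Fin g) (Fin g) K :=
  of fun i j => ζ ^ (((i : ℕ) + 1) * (2 * ((j : ℕ) + 1) - 1)) * (1 - ζ ^ ((i : ℕ) + 1))

def periodsB (ζ : K) (g : ℕ) : Matrix (Fin g) (Fin g) K :=
  of fun i j => (ζ ^ (2 * ((i : ℕ) + 1) * ((j : ℕ) + 1)) - 1) / (ζ ^ ((i : ℕ) + 1) + 1)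

variable {ζ : K}

theorem periodsA_eq_diagonal_mul_dftMinor (hζ : ζ ≠ 0) :
    periodsA ζ g =
      diagonal (fun i : Fin g => (1 - ζ ^ ((i : ℕ) + 1)) * ζ⁻¹ ^ ((i : ℕ) + 1)) *
        dftMinor (ζ ^ 2) g := by
  ext i j
  have hexp : (ζ ^ 2) ^ (((i : ℕ) + 1) * ((j : ℕ) + 1)) =
      ζ ^ (((i : ℕ) + 1) * (2 * ((j : ℕ) + 1) - 1)) * ζ ^ ((i : ℕ) + 1) := by
    rw [← pow_mul, ← pow_add]
    congr 1
    grind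
  rw [periodsA, dftMinor, diagonal_mul, of_apply, of_apply, hexp, inv_pow]
  field_simp

theorem periodsB_eq_diagonal_mul :
    periodsB ζ g =
      diagonal (fun i : Fin g => (ζ ^ ((i : ℕ) + 1) + 1)⁻¹) *
        (dftMinor (ζ ^ 2) g - of fun _ _ => 1) := by
  ext i j
  simp only [periodsB, dftMinor, diagonal_mul, Matrix.sub_apply, of_apply, ← pow_mul, mul_assoc]
  ring

theorem inv_periodsA (hζ : IsPrimitiveRoot ζ (2 * (g + 1))) :
    (periodsA ζ g)⁻¹ =
      dftMinorInv (ζ ^ 2) g *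
        diagonal (fun i : Fin g => ((1 - ζ ^ ((i : ℕ) + 1)) * ζ⁻¹ ^ ((i : ℕ) + 1))⁻¹) := by
  have hζ0 : ζ ≠ 0 := hζ.ne_zero (by omega)
  apply inv_eq_right_inv
  rw [periodsA_eq_diagonal_mul_dftMinor hζ0, mul_assoc, ← mul_assoc (dftMinor _ _),
    dftMinor_mul_dftMinorInv (hζ.pow (by omega) rfl), one_mul, diagonal_mul_diagonal,
    ← diagonal_one]
  congr 1
  funext i
  refine mul_inv_cancel₀ (mul_ne_zero ?_ (pow_ne_zero _ (inv_ne_zero hζ0)))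
  exact sub_ne_zero.mpr (hζ.pow_ne_one_of_pos_of_lt (by omega) (by omega)).symm

theorem inv_periodsA_mul_periodsB_apply (hζ : IsPrimitiveRoot ζ (2 * (g + 1))) (i j : Fin g) :
    ((periodsA ζ g)⁻¹ * periodsB ζ g) i j =
      (1 / ((g : K) + 1)) * ∑ k ∈ Icc 1 g,
        ζ ^ k * ((ζ ^ 2)⁻¹ ^ (((i : ℕ) + 1) * k) - 1) *
          (ζ ^ (2 * k * ((j : ℕ) + 1)) - 1) / (1 - ζ ^ (2 * k)) := by
  rw [inv_periodsA hζ, periodsB_eq_diagonal_mul, mul_assoc, ← mul_assoc (diagonal _),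
    diagonal_mul_diagonal, mul_apply, mul_sum, ← sum_fin_eq_sum_Icc_one]
  refine sum_congr rfl fun k _ => ?_
  simp only [dftMinorInv, dftMinor, diagonal_mul, Matrix.sub_apply, of_apply, mul_inv, inv_pow,
    inv_inv]
  have hfactor : 1 - ζ ^ (2 * ((k : ℕ) + 1)) =
      (1 - ζ ^ ((k : ℕ) + 1)) * (ζ ^ ((k : ℕ) + 1) + 1) := by ring
  rw [hfactor, div_mul_eq_div_div]
  ring

end

theorem stmt17_general (g : ℕ)
    (ζ : ℂ) (hζ : ζ = Complex.exp (2 * Real.pi * Complex.I / (2 * g + 2)))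
    (A B : Matrix (Fin g) (Fin g) ℂ)
    (hA : ∀ i j : Fin g, A i j =
      ζ ^ (((i : ℕ) + 1) * (2 * ((j : ℕ) + 1) - 1)) * (1 - ζ ^ ((i : ℕ) + 1)))
    (hB : ∀ i j : Fin g, B i j =
      (ζ ^ (2 * ((i : ℕ) + 1) * ((j : ℕ) + 1)) - 1) / (ζ ^ ((i : ℕ) + 1) + 1)) :
    ∀ i j : Fin g, (A⁻¹ * B) i j =
      (1 / ((g : ℂ) + 1)) * ∑ k ∈ Finset.Icc 1 g,
        ζ ^ (k : ℤ) * (ζ ^ (-(2 * ((i : ℤ) + 1) * (k : ℤ))) - 1)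
          * (ζ ^ (2 * (k : ℤ) * ((j : ℤ) + 1)) - 1) / (1 - ζ ^ (2 * (k : ℤ))) := by
  have hprim : IsPrimitiveRoot ζ (2 * (g + 1)) := by
    rw [hζ, show 2 * (g : ℂ) + 2 = ((2 * (g + 1) : ℕ) : ℂ) by push_cast; ring]
    exact Complex.isPrimitiveRoot_exp _ (by omega)
  obtain rfl : A = periodsA ζ g := Matrix.ext hA
  obtain rfl : B = periodsB ζ g := Matrix.ext hB
  intro i j
  rw [inv_periodsA_mul_periodsB_apply hprim]
  refine congrArg _ (sum_congr rfl fun k _ => ?_)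
  have hneg : ζ ^ (-(2 * ((i : ℤ) + 1) * k)) = (ζ ^ 2)⁻¹ ^ (((i : ℕ) + 1) * k) := by
    rw [zpow_neg, inv_pow, ← pow_mul, ← zpow_natCast]
    push_cast
    ring_nf
  rw [hneg]
  norm_cast

/-- Schindler's theorem: the `(i,j)`-entry of the period matrix `Z = Ω_a⁻¹ Ω_b` of the
hyperelliptic curve `w² = z^{2g+2} - 1` equals
`(1/(g+1)) Σ_{k=1}^{g} ζ^k(ζ^{-2ik}-1)(ζ^{2kj}-1)/(1-ζ^{2k})`. -/
theorem stmt17 (g : ℕ) (hg : 1 ≤ g)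
    (ζ : ℂ) (hζ : ζ = Complex.exp (2 * Real.pi * Complex.I / (2 * g + 2)))
    (A B : Matrix (Fin g) (Fin g) ℂ)
    (hA : ∀ i j : Fin g, A i j =
      ζ ^ (((i : ℕ) + 1) * (2 * ((j : ℕ) + 1) - 1)) * (1 - ζ ^ ((i : ℕ) + 1)))
    (hB : ∀ i j : Fin g, B i j =
      (ζ ^ (2 * ((i : ℕ) + 1) * ((j : ℕ) + 1)) - 1) / (ζ ^ ((i : ℕ) + 1) + 1)) :
    ∀ i j : Fin g, (A⁻¹ * B) i j =
      (1 / ((g : ℂ) + 1)) * ∑ k ∈ Finset.Icc 1 g,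
        ζ ^ (k : ℤ) * (ζ ^ (-(2 * ((i : ℤ) + 1) * (k : ℤ))) - 1)
          * (ζ ^ (2 * (k : ℤ) * ((j : ℤ) + 1)) - 1) / (1 - ζ ^ (2 * (k : ℤ))) :=
  stmt17_general g ζ hζ A B hA hB
end
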